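/- arXiv:1703.07102 — 5 statements merged into one kernel-verified Lean document; each statement's English description precedes it below -/
import Mathlib

section
/- Let n ≥ 1 be an integer, let a > 0 be a scaling factor, let α ∈ W(n) be a weak composition of n, and let f : [0,∞) → [0,∞) be a right-continuous, weakly decreasing function with f(x) → 0 as x → ∞. Then sup_{x ≥ 0} |∂̃ᵃ(ord α)(x) − f(x)| ≤ sup_{x ≥ 0} |∂̃ᵃα(x) − f(x)|. -/
/-!
For every index `k` there is a `j ≥ k` with `α j ≥ ord α k` and a `j' ≤ k` with
`α j' ≤ ord α k`, since at least `k + 1` parts of `α` are `≥ ord α k` and at most `k` are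
`> ord α k`. As `f` is decreasing, the positive deviation `∂̃ᵃ(ord α)(x) - f(x)` is therefore
dominated by `∂̃ᵃα(y) - f(y)` at a point `y ≥ x` lying on step `j`, and the negative deviation by
the one at a point `y ≤ x` lying on step `j'`.
-/

open Filter

/-- α is a weak composition of n: a finitely supported sequence of naturals
(indexed from 0, so `α i` is part `i+1`) summing to n. -/
def IsWeakComp (n : ℕ) (α : ℕ →₀ ℕ) : Prop :=
  ∑ i ∈ α.support, α i = n

/-- `ord α` is the weakly decreasing rearrangement of the parts of α
(indexed from 0, with value 0 beyond the positive parts). -/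
def ord (α : ℕ →₀ ℕ) : ℕ → ℕ :=
  fun i => ((α.support.val.map ⇑α).sort (· ≤ ·)).reverse.getD i 0

/-- The rescaled diagram-boundary function `∂̃ᵃα(x) = (a/n)·α_{⌊x·a⌋+1}`
(with 0-indexed parts, so part `⌊x·a⌋+1` is `α ⌊x·a⌋`). -/
noncomputable def rescaledBdry (n : ℕ) (a : ℝ) (α : ℕ → ℕ) (x : ℝ) : ℝ :=
  (a / (n : ℝ)) * (α ⌊x * a⌋₊ : ℝ)

namespace List.SortedGE

variable {β : Type*} [LinearOrder β] {L : List β}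

theorem exists_eq_append_getElem_cons (hL : L.SortedGE) {k : ℕ} (hk : k < L.length) :
    ∃ T R, L = T ++ L[k] :: R ∧ T.length = k ∧ (∀ t ∈ T, L[k] ≤ t) ∧ ∀ r ∈ R, r ≤ L[k] := by
  have hsplit : L = L.take k ++ L[k] :: L.drop (k + 1) := by
    rw [← drop_eq_getElem_cons hk, take_append_drop]
  have hpair := hL.pairwise
  rw [hsplit, pairwise_append, pairwise_cons] at hpair
  exact ⟨_, _, hsplit, length_take_of_le hk.le, fun t ht => hpair.2.2 t ht _ mem_cons_self,
    hpair.2.1.1⟩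

theorem lt_countP_getElem_le (hL : L.SortedGE) {k : ℕ} (hk : k < L.length) :
    k < L.countP (fun x => L[k] ≤ x) := by
  obtain ⟨T, R, hsplit, rfl, hT, -⟩ := hL.exists_eq_append_getElem_cons hk
  generalize L[T.length] = v at *
  subst hsplit
  rw [countP_append, countP_eq_length.2 (by simpa using hT), countP_cons]
  simp

theorem countP_getElem_lt_le (hL : L.SortedGE) {k : ℕ} (hk : k < L.length) :
    L.countP (fun x => L[k] < x) ≤ k := by
  obtain ⟨T, R, hsplit, rfl, -, hR⟩ := hL.exists_eq_append_getElem_cons hk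
  generalize L[T.length] = v at *
  subst hsplit
  rw [countP_append, countP_cons, countP_eq_zero (l := R) |>.2 (by simpa using hR)]
  simpa using T.countP_le_length

end List.SortedGE

section Rearrangement

open Finset

variable (α : ℕ →₀ ℕ)

def ordList : List ℕ :=
  ((α.support.val.map ⇑α).sort (· ≤ ·)).reverse

theorem ord_eq_getD (k : ℕ) : ord α k = (ordList α).getD k 0 := rfl

theorem sortedGE_ordList : (ordList α).SortedGE :=
  (Multiset.pairwise_sort _ _).sortedLE.reverse

theorem card_filter_support_eq_countP_ordList (p : ℕ → Prop) [DecidablePred p] :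
    #{j ∈ α.support | p (α j)} = (ordList α).countP p := by
  have hperm : (ordList α : Multiset ℕ) = α.support.val.map ⇑α := by
    rw [ordList, Multiset.coe_reverse, Multiset.sort_eq]
  rw [← Multiset.coe_countP, hperm, Multiset.countP_map]
  rfl

theorem exists_ge_ord_le_apply (k : ℕ) : ∃ j ≥ k, ord α k ≤ α j := by
  by_contra! h
  have hk : k < (ordList α).length := by
    by_contra! hk
    have := h k le_rfl
    rw [ord_eq_getD, List.getD_eq_default _ _ hk] at this
    omega
  have hsub : {j ∈ α.support | ord α k ≤ α j} ⊆ range k := fun j hj => by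
    have := (mem_filter.1 hj).2
    by_contra hjk
    exact (h j (by simpa using hjk)).not_ge this
  have hcount := (sortedGE_ordList α).lt_countP_getElem_le hk
  rw [← List.getD_eq_getElem _ 0, ← ord_eq_getD, ← card_filter_support_eq_countP_ordList] at hcount
  simpa using hcount.trans_le (card_le_card hsub)

theorem exists_le_apply_le_ord (k : ℕ) : ∃ j ≤ k, α j ≤ ord α k := by
  by_contra! h
  have hsub : range (k + 1) ⊆ {j ∈ α.support | ord α k < α j} := fun j hj => by
    have := h j (by simpa [Nat.lt_succ_iff] using hj)
    simp only [mem_filter, Finsupp.mem_support_iff]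
    exact ⟨by omega, this⟩
  have hcount : (ordList α).countP (fun x => ord α k < x) ≤ k := by
    by_cases hk : k < (ordList α).length
    · rw [ord_eq_getD, List.getD_eq_getElem _ _ hk]
      exact (sortedGE_ordList α).countP_getElem_lt_le hk
    · exact List.countP_le_length.trans (not_lt.1 hk)
  rw [← card_filter_support_eq_countP_ordList] at hcount
  simpa using (card_le_card hsub).trans hcount

end Rearrangement

theorem exists_le_floor_mul_eq {a x : ℝ} {j : ℕ} (ha : 0 < a) (hx : 0 ≤ x)
    (hj : j ≤ ⌊x * a⌋₊) : ∃ y, 0 ≤ y ∧ y ≤ x ∧ ⌊y * a⌋₊ = j := by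
  refine ⟨j / a, by positivity, ?_, by rw [div_mul_cancel₀ _ ha.ne', Nat.floor_natCast]⟩
  rw [div_le_iff₀ ha]
  exact (Nat.cast_le.2 hj).trans (Nat.floor_le (by positivity))

theorem exists_ge_floor_mul_eq {a x : ℝ} {j : ℕ} (ha : 0 < a) (hj : ⌊x * a⌋₊ ≤ j) :
    ∃ y, x ≤ y ∧ ⌊y * a⌋₊ = j := by
  refine ⟨max x (j / a), le_max_left _ _, ?_⟩
  have hja : (j / a) * a = j := div_mul_cancel₀ _ ha.ne'
  rw [Nat.floor_eq_iff (by positivity), max_mul_of_nonneg _ _ ha.le, hja]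
  refine ⟨le_max_right _ _, max_lt ?_ (by linarith)⟩
  exact (Nat.lt_floor_add_one _).trans_le (by exact_mod_cast Nat.add_le_add_right hj 1)

section RescaledBdry

variable {n : ℕ} {a : ℝ} {f : ℝ → ℝ}

theorem rescaledBdry_le_rescaledBdry (ha : 0 ≤ a) {u v : ℕ → ℕ} {x y : ℝ}
    (h : u ⌊x * a⌋₊ ≤ v ⌊y * a⌋₊) : rescaledBdry n a u x ≤ rescaledBdry n a v y :=
  mul_le_mul_of_nonneg_left (by exact_mod_cast h) (by positivity)

theorem bddAbove_range_abs_rescaledBdry_sub {u : ℕ → ℕ} (hu : BddAbove (Set.range u))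
    (hf : AntitoneOn f (Set.Ici 0)) (hf0 : ∀ x, 0 ≤ x → 0 ≤ f x) :
    BddAbove (Set.range fun x : {x : ℝ // 0 ≤ x} => |rescaledBdry n a u x - f x|) := by
  obtain ⟨B, hB⟩ := hu
  refine ⟨|a / n| * B + f 0, ?_⟩
  rintro _ ⟨⟨x, hx⟩, rfl⟩
  have hu : |rescaledBdry n a u x| ≤ |a / n| * B := by
    rw [rescaledBdry, abs_mul, Nat.abs_cast]
    exact mul_le_mul_of_nonneg_left (by exact_mod_cast hB ⟨_, rfl⟩) (abs_nonneg _)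
  have hf : |f x| ≤ f 0 := by
    rw [abs_of_nonneg (hf0 x hx)]
    exact hf Set.self_mem_Ici hx hx
  exact (abs_sub _ _).trans (add_le_add hu hf)

theorem exists_abs_rescaledBdry_sub_le {u v : ℕ → ℕ} (ha : 0 < a)
    (hf : AntitoneOn f (Set.Ici 0)) (hge : ∀ k, ∃ j ≥ k, v k ≤ u j)
    (hle : ∀ k, ∃ j ≤ k, u j ≤ v k) {x : ℝ} (hx : 0 ≤ x) :
    ∃ y, 0 ≤ y ∧ |rescaledBdry n a v x - f x| ≤ |rescaledBdry n a u y - f y| := by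
  rcases le_total (f x) (rescaledBdry n a v x) with hvf | hfv
  · obtain ⟨j, hkj, hvu⟩ := hge ⌊x * a⌋₊
    obtain ⟨y, hxy, rfl⟩ := exists_ge_floor_mul_eq ha hkj
    have hR := rescaledBdry_le_rescaledBdry (n := n) ha.le hvu
    have hfy := hf hx (hx.trans hxy) hxy
    refine ⟨y, hx.trans hxy, ?_⟩
    rw [abs_of_nonneg (sub_nonneg.2 hvf)]
    exact (by linarith : _ ≤ _).trans (le_abs_self _)
  · obtain ⟨j, hjk, huv⟩ := hle ⌊x * a⌋₊
    obtain ⟨y, hy, hyx, rfl⟩ := exists_le_floor_mul_eq ha hx hjk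
    have hR := rescaledBdry_le_rescaledBdry (n := n) ha.le huv
    have hfy := hf hy hx hyx
    refine ⟨y, hy, ?_⟩
    rw [abs_of_nonpos (sub_nonpos.2 hfv)]
    exact (by linarith : _ ≤ _).trans (neg_le_abs _)

end RescaledBdry

theorem stmt0_general (n : ℕ) (a : ℝ) (ha : 0 < a)
    (α : ℕ →₀ ℕ)
    (f : ℝ → ℝ) (hf0 : ∀ x : ℝ, 0 ≤ x → 0 ≤ f x)
    (hfmono : ∀ x y : ℝ, 0 ≤ x → x ≤ y → f y ≤ f x) :
    (⨆ x : {x : ℝ // 0 ≤ x}, |rescaledBdry n a (ord α) x.1 - f x.1|) ≤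
      ⨆ x : {x : ℝ // 0 ≤ x}, |rescaledBdry n a (⇑α) x.1 - f x.1| := by
  have hf : AntitoneOn f (Set.Ici 0) := fun x hx y _ hxy => hfmono x y hx hxy
  have : Nonempty {x : ℝ // 0 ≤ x} := ⟨⟨0, le_rfl⟩⟩
  refine ciSup_mono_of_forall_exists
    (bddAbove_range_abs_rescaledBdry_sub α.finite_range.bddAbove hf hf0) fun ⟨x, hx⟩ => ?_
  obtain ⟨y, hy, hxy⟩ := exists_abs_rescaledBdry_sub_le ha hf (exists_ge_ord_le_apply α)
    (exists_le_apply_le_ord α) hx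
  exact ⟨⟨y, hy⟩, hxy⟩

theorem stmt0 (n : ℕ) (hn : 1 ≤ n) (a : ℝ) (ha : 0 < a)
    (α : ℕ →₀ ℕ) (hα : IsWeakComp n α)
    (f : ℝ → ℝ) (hf0 : ∀ x : ℝ, 0 ≤ x → 0 ≤ f x)
    (hfmono : ∀ x y : ℝ, 0 ≤ x → x ≤ y → f y ≤ f x)
    (hfrc : ∀ x : ℝ, 0 ≤ x → ContinuousWithinAt f (Set.Ici x) x)
    (hflim : Tendsto f atTop (nhds 0)) :
    (⨆ x : {x : ℝ // 0 ≤ x}, |rescaledBdry n a (ord α) x.1 - f x.1|) ≤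
      ⨆ x : {x : ℝ // 0 ≤ x}, |rescaledBdry n a (⇑α) x.1 - f x.1| :=
  stmt0_general n a ha α f hf0 hfmono
end

section
/- For each n ≥ 2 let 0 < p_n ≤ 1 and 0 < q_n ≤ 1 with p_n·q_n²·n/log n → ∞ as n → ∞, let α^{(0)} = α^{(0,n)} ∈ W(n) be an arbitrary initial configuration, and let (α^{(k)})_{k≥0} be the Markov chain B(n,p_n,q_n) started at α^{(0)}. Set D = ⌈14·log n/(p_n·q_n)⌉ and M = ⌈n²/p_n⌉. Then (1/(q_n·n))·max{N(α^{(D+1)}), N(α^{(D+2)}), …, N(α^{(D+M)})} → 0 in probability as n → ∞. -/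
open Filter

/-- N(α): the number of parts of α, i.e. the largest (1-indexed) position of a positive
part (0 if there is none).  With 0-indexed parts this is (largest index in the support) + 1. -/
def numParts (α : ℕ →₀ ℕ) : ℕ :=
  α.support.sup (· + 1)

/-- The probability that a Binomial(m,p) variable equals k. -/
noncomputable def binomPMF (m : ℕ) (p : ℝ) (k : ℕ) : ENNReal :=
  ENNReal.ofReal ((m.choose k : ℝ) * p ^ k * (1 - p) ^ (m - k))

open scoped Classical in
/-- One-step transition probability of the p-random q-proportion Bulgarian solitaire
B(n,p,q) on weak compositions (parts indexed from 0; the new pile is part 0). -/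
noncomputable def solTrans (p q : ℝ) (α β : ℕ →₀ ℕ) : ENNReal :=
  if (∀ i, β (i + 1) ≤ α i) ∧ β 0 = ∑ i ∈ α.support, (α i - β (i + 1)) then
    ∏ i ∈ α.support, binomPMF ⌈q * (α i : ℝ)⌉₊ p (α i - β (i + 1))
  else 0

/-- The probability that the first m+1 states of the Markov chain with transition
probabilities T started at a form a trajectory satisfying E.  (Trajectories are encoded
as functions ℕ → S frozen from time m on, so that each length-m path is counted once.) -/
noncomputable def pathProb {S : Type*} (T : S → S → ENNReal) (a : S) (m : ℕ)
    (E : (ℕ → S) → Prop) : ENNReal :=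
  ∑' ω : {ω : ℕ → S // ω 0 = a ∧ (∀ j : ℕ, m ≤ j → ω (j + 1) = ω j) ∧ E ω},
    ∏ k ∈ Finset.range m, T (ω.1 k) (ω.1 (k + 1))

/-!
`N(α) > J` forces a card at a position `≥ J`, so it suffices to bound the expected number
`tailMass J` of such cards. A pile at position `i` reappears at position `i + 1` after losing a
Binomial(⌈q αᵢ⌉, p) number of cards, so it shrinks by the factor `1 - pq` in expectation; as the
total number of cards stays `n`, after `k` steps `E[tailMass J] ≤ (1 - pq) ^ min J k * n`.
Markov's inequality and a union bound over the `M` times `D < k ≤ D + M` bound the probability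
by `M (1 - pq) ^ min ⌊εqn⌋ (D + 1) * n`. Once `pq²n ≥ (1 + 15/ε) log n`, both exponents are
at least `14 log n / (pq)` and `M ≤ 2n³`, so the probability is at most `2 / n`.
-/

section Binomial

open Finset Polynomial
open scoped ENNReal

variable {p : ℝ}

lemma binomPMF_eq_ofReal_eval (m : ℕ) (p : ℝ) (k : ℕ) :
    binomPMF m p k = ENNReal.ofReal ((bernsteinPolynomial ℝ m k).eval p) := by
  simp [binomPMF, bernsteinPolynomial]

lemma eval_bernsteinPolynomial_nonneg (hp0 : 0 ≤ p) (hp1 : p ≤ 1) (m k : ℕ) :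
    0 ≤ (bernsteinPolynomial ℝ m k).eval p := by
  have : 0 ≤ 1 - p := sub_nonneg.2 hp1
  simp only [bernsteinPolynomial, eval_mul, eval_pow, eval_sub, eval_one, eval_X, eval_natCast]
  positivity

lemma sum_range_eval_bernsteinPolynomial_mul_of_le {m a : ℕ} (hma : m ≤ a) (f : ℕ → ℝ) :
    ∑ k ∈ range (a + 1), (bernsteinPolynomial ℝ m k).eval p * f k
      = ∑ k ∈ range (m + 1), (bernsteinPolynomial ℝ m k).eval p * f k := by
  refine (sum_subset (range_subset_range.2 (by omega)) fun k _ hk => ?_).symm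
  rw [bernsteinPolynomial.eq_zero_of_lt ℝ (by simpa using hk), eval_zero, zero_mul]

lemma sum_range_binomPMF (hp0 : 0 ≤ p) (hp1 : p ≤ 1) {m a : ℕ} (hma : m ≤ a) :
    ∑ k ∈ range (a + 1), binomPMF m p k = 1 := by
  have htrunc := sum_range_eval_bernsteinPolynomial_mul_of_le (p := p) hma fun _ => 1
  simp only [mul_one] at htrunc
  simp_rw [binomPMF_eq_ofReal_eval]
  rw [← ENNReal.ofReal_sum_of_nonneg fun k _ => eval_bernsteinPolynomial_nonneg hp0 hp1 m k,
    htrunc, ← eval_finsetSum, bernsteinPolynomial.sum, eval_one, ENNReal.ofReal_one]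

lemma sum_range_eval_bernsteinPolynomial_mul_sub {m a : ℕ} (hma : m ≤ a) :
    ∑ k ∈ range (a + 1), (bernsteinPolynomial ℝ m k).eval p * ((a - k : ℕ) : ℝ) = a - m * p := by
  have hmean := congrArg (eval p) (bernsteinPolynomial.sum_smul ℝ m)
  have htotal := congrArg (eval p) (bernsteinPolynomial.sum ℝ m)
  simp only [eval_finsetSum, nsmul_eq_mul, eval_mul, eval_natCast, eval_X, eval_one]
    at hmean htotal
  rw [sum_range_eval_bernsteinPolynomial_mul_of_le hma]
  calc ∑ k ∈ range (m + 1), (bernsteinPolynomial ℝ m k).eval p * ((a - k : ℕ) : ℝ)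
      = ∑ k ∈ range (m + 1), ((a : ℝ) * (bernsteinPolynomial ℝ m k).eval p
          - k * (bernsteinPolynomial ℝ m k).eval p) := by
        refine sum_congr rfl fun k hk => ?_
        rw [Nat.cast_sub (by simp at hk; omega)]
        ring
    _ = a - m * p := by rw [sum_sub_distrib, ← mul_sum, htotal, hmean, mul_one]

lemma sum_range_binomPMF_mul_sub_le {q : ℝ} (hp0 : 0 ≤ p) (hp1 : p ≤ 1) {m a : ℕ}
    (hma : m ≤ a) (hqa : q * a ≤ m) :
    ∑ k ∈ range (a + 1), binomPMF m p k * ((a - k : ℕ) : ℝ≥0∞)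
      ≤ ENNReal.ofReal (1 - p * q) * a := by
  simp_rw [binomPMF_eq_ofReal_eval, ← ENNReal.ofReal_natCast,
    ← ENNReal.ofReal_mul (eval_bernsteinPolynomial_nonneg hp0 hp1 m _)]
  rw [← ENNReal.ofReal_sum_of_nonneg fun k _ =>
      mul_nonneg (eval_bernsteinPolynomial_nonneg hp0 hp1 m k) (Nat.cast_nonneg _),
    sum_range_eval_bernsteinPolynomial_mul_sub hma, ← ENNReal.ofReal_mul' (Nat.cast_nonneg _)]
  exact ENNReal.ofReal_le_ofReal (by nlinarith)

end Binomial

section MarkovChain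

open Finset
open scoped ENNReal

variable {S : Type*}

noncomputable def expectStep (T : S → S → ℝ≥0∞) (f : S → ℝ≥0∞) (a : S) : ℝ≥0∞ :=
  ∑' b, T a b * f b

lemma expectStep_mono (T : S → S → ℝ≥0∞) : Monotone (expectStep T) :=
  fun _ _ hfg _ => ENNReal.tsum_le_tsum fun b => mul_le_mul_right (hfg b) _

lemma iterate_expectStep_smul (T : S → S → ℝ≥0∞) (c : ℝ≥0∞) (f : S → ℝ≥0∞) (k : ℕ) :
    (expectStep T)^[k] (c • f) = c • (expectStep T)^[k] f := by
  have hcomm : Function.Commute (expectStep T) (c • ·) := fun g => funext fun a => by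
    simp only [expectStep, Pi.smul_apply, smul_eq_mul, ← ENNReal.tsum_mul_left, mul_left_comm]
  exact (hcomm.iterate_left k) f

def seqCons (a : S) (ω : ℕ → S) : ℕ → S
  | 0 => a
  | n + 1 => ω n

lemma seqCons_tail {ω : ℕ → S} {a : S} (h : ω 0 = a) : seqCons a (fun n => ω (n + 1)) = ω := by
  funext n
  cases n with
  | zero => exact h.symm
  | succ n => rfl

lemma pathProb_succ (T : S → S → ℝ≥0∞) (a : S) (m : ℕ) (E : (ℕ → S) → Prop) :
    pathProb T a (m + 1) E = ∑' b, T a b * pathProb T b m (fun ω => E (seqCons a ω)) := by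
  simp_rw [pathProb, ← ENNReal.tsum_mul_left]
  rw [← ENNReal.tsum_sigma]
  let e : {ω : ℕ → S // ω 0 = a ∧ (∀ j, m + 1 ≤ j → ω (j + 1) = ω j) ∧ E ω} ≃
      Σ b : S, {ω : ℕ → S // ω 0 = b ∧ (∀ j, m ≤ j → ω (j + 1) = ω j) ∧ E (seqCons a ω)} :=
    { toFun := fun ω => ⟨ω.1 1, fun n => ω.1 (n + 1), rfl, fun j hj => ω.2.2.1 (j + 1) (by omega),
        by rw [seqCons_tail ω.2.1]; exact ω.2.2.2⟩
      invFun := fun ω => ⟨seqCons a ω.2.1, rfl, fun j hj => by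
          obtain ⟨j, rfl⟩ : ∃ i, j = i + 1 := ⟨j - 1, by omega⟩
          exact ω.2.2.2.1 j (by omega), ω.2.2.2.2⟩
      left_inv := fun ω => Subtype.ext (seqCons_tail ω.2.1)
      right_inv := fun ⟨b, ω, h0, _⟩ => by subst h0; rfl }
  rw [← e.tsum_eq]
  refine tsum_congr fun ω => ?_
  rw [prod_range_succ', ω.2.1, mul_comm]
  rfl

lemma pathProb_zero_le_one (T : S → S → ℝ≥0∞) (a : S) (E : (ℕ → S) → Prop) :
    pathProb T a 0 E ≤ 1 := by
  have hconst (ω : {ω : ℕ → S // ω 0 = a ∧ (∀ j, 0 ≤ j → ω (j + 1) = ω j) ∧ E ω}) (n : ℕ) :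
      ω.1 n = a := by
    induction n with
    | zero => exact ω.2.1
    | succ n ih => rw [ω.2.2.1 n n.zero_le, ih]
  rcases isEmpty_or_nonempty {ω : ℕ → S // ω 0 = a ∧ (∀ j, 0 ≤ j → ω (j + 1) = ω j) ∧ E ω}
    with hempty | hne
  · simp [pathProb]
  · obtain ⟨ω₀⟩ := hne
    rw [pathProb, tsum_eq_single ω₀ fun ω hω =>
      (hω (Subtype.ext (funext fun n => (hconst ω n).trans (hconst ω₀ n).symm))).elim]
    simp

lemma pathProb_le_one (T : S → S → ℝ≥0∞) (hT : ∀ a, ∑' b, T a b ≤ 1) (m : ℕ) :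
    ∀ (a : S) (E : (ℕ → S) → Prop), pathProb T a m E ≤ 1 := by
  induction m with
  | zero => exact pathProb_zero_le_one T
  | succ m ih =>
    intro a E
    rw [pathProb_succ]
    calc ∑' b, T a b * pathProb T b m _ ≤ ∑' b, T a b * 1 :=
          ENNReal.tsum_le_tsum fun b => mul_le_mul_right (ih b _) _
      _ ≤ 1 := by simpa using hT a

/-- Markov's inequality for the state at time `k`. -/
lemma pathProb_one_le_apply_le (T : S → S → ℝ≥0∞) (hT : ∀ a, ∑' b, T a b ≤ 1)
    (f : S → ℝ≥0∞) (k : ℕ) :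
    ∀ (m : ℕ) (a : S), k ≤ m →
      pathProb T a m (fun ω => 1 ≤ f (ω k)) ≤ (expectStep T)^[k] f a := by
  induction k with
  | zero =>
    intro m a _
    by_cases ha : 1 ≤ f a
    · exact (pathProb_le_one T hT m a _).trans ha
    · have : IsEmpty {ω : ℕ → S // ω 0 = a ∧ (∀ j, m ≤ j → ω (j + 1) = ω j) ∧ 1 ≤ f (ω 0)} :=
        ⟨fun ω => ha (ω.2.1 ▸ ω.2.2.2)⟩
      simp [pathProb]
  | succ k ih =>
    intro m a hkm
    obtain ⟨m, rfl⟩ : ∃ m', m = m' + 1 := ⟨m - 1, by omega⟩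
    rw [pathProb_succ, Function.iterate_succ_apply']
    exact ENNReal.tsum_le_tsum fun b => mul_le_mul_right (ih m b (by omega)) _

lemma pathProb_eq_tsum_indicator (T : S → S → ℝ≥0∞) (a : S) (m : ℕ) (E : (ℕ → S) → Prop) :
    pathProb T a m E = ∑' ω, {ω : ℕ → S | ω 0 = a ∧ (∀ j, m ≤ j → ω (j + 1) = ω j) ∧ E ω}.indicator
      (fun ω => ∏ k ∈ range m, T (ω k) (ω (k + 1))) ω :=
  _root_.tsum_subtype {ω : ℕ → S | ω 0 = a ∧ (∀ j, m ≤ j → ω (j + 1) = ω j) ∧ E ω}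
    (fun ω => ∏ k ∈ range m, T (ω k) (ω (k + 1)))

lemma pathProb_le_sum {ι : Type*} (T : S → S → ℝ≥0∞) (a : S) (m : ℕ) (E : (ℕ → S) → Prop)
    (W : Finset ι) (F : ι → (ℕ → S) → Prop) (hEF : ∀ ω, E ω → ∃ w ∈ W, F w ω) :
    pathProb T a m E ≤ ∑ w ∈ W, pathProb T a m (F w) := by
  classical
  simp_rw [pathProb_eq_tsum_indicator]
  rw [← Summable.tsum_finsetSum fun _ _ => ENNReal.summable]
  refine ENNReal.tsum_le_tsum fun ω => Set.indicator_apply_le' (fun hω => ?_) fun _ => zero_le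
  obtain ⟨w, hw, hFw⟩ := hEF ω hω.2.2
  refine le_trans (le_of_eq ?_) (single_le_sum (fun _ _ => zero_le) hw)
  rw [Set.indicator_apply, if_pos ⟨hω.1, hω.2.1, hFw⟩]

end MarkovChain

section Solitaire

open Finset
open scoped ENNReal

def IsMove (α β : ℕ →₀ ℕ) : Prop :=
  (∀ i, β (i + 1) ≤ α i) ∧ β 0 = ∑ i ∈ α.support, (α i - β (i + 1))

open scoped Classical in
lemma solTrans_eq_ite (p q : ℝ) (α β : ℕ →₀ ℕ) :
    solTrans p q α β =
      if IsMove α β then ∏ i ∈ α.support, binomPMF ⌈q * (α i : ℝ)⌉₊ p (α i - β (i + 1))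
      else 0 := by
  unfold solTrans
  exact if_congr Iff.rfl rfl rfl

lemma IsMove.of_solTrans_ne_zero {p q : ℝ} {α β : ℕ →₀ ℕ} (h : solTrans p q α β ≠ 0) :
    IsMove α β := by
  by_contra hmove
  exact h (by rw [solTrans_eq_ite, if_neg hmove])

/-- The state reached from `α` when `Y i` cards are taken from pile `i`. -/
noncomputable def moveOf (α : ℕ →₀ ℕ) (Y : (i : ℕ) → i ∈ α.support → ℕ) : ℕ →₀ ℕ :=
  Finsupp.onFinset (insert 0 (α.support.image (· + 1)))
    (fun j => Nat.casesOn j (∑ i ∈ α.support.attach, Y i i.2)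
      fun i => if h : i ∈ α.support then α i - Y i h else 0)
    (by
      rintro (_ | i) hi
      · exact mem_insert_self _ _
      · refine mem_insert_of_mem (mem_image_of_mem _ ?_)
        by_contra h
        simp [h] at hi)

lemma moveOf_zero (α : ℕ →₀ ℕ) (Y : (i : ℕ) → i ∈ α.support → ℕ) :
    moveOf α Y 0 = ∑ i ∈ α.support.attach, Y i i.2 := rfl

lemma moveOf_succ (α : ℕ →₀ ℕ) (Y : (i : ℕ) → i ∈ α.support → ℕ) (i : ℕ) :
    moveOf α Y (i + 1) = if h : i ∈ α.support then α i - Y i h else 0 := rfl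

lemma moveOf_succ_of_mem (α : ℕ →₀ ℕ) (Y : (i : ℕ) → i ∈ α.support → ℕ) {i : ℕ}
    (h : i ∈ α.support) : moveOf α Y (i + 1) = α i - Y i h := dif_pos h

lemma isMove_moveOf (α : ℕ →₀ ℕ) {Y : (i : ℕ) → i ∈ α.support → ℕ}
    (hY : Y ∈ α.support.pi fun i => range (α i + 1)) : IsMove α (moveOf α Y) := by
  have hle (i) (h : i ∈ α.support) : Y i h ≤ α i := by
    have := mem_pi.1 hY i h
    simp only [mem_range] at this
    omega
  refine ⟨fun i => ?_, ?_⟩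
  · rw [moveOf_succ]
    split_ifs <;> omega
  · rw [moveOf_zero, ← sum_attach α.support fun i => α i - moveOf α Y (i + 1)]
    refine sum_congr rfl fun i _ => ?_
    rw [moveOf_succ_of_mem _ _ i.2]
    have := hle i i.2
    omega

lemma IsMove.exists_eq_moveOf {α β : ℕ →₀ ℕ} (h : IsMove α β) :
    ∃ Y ∈ α.support.pi fun i => range (α i + 1), moveOf α Y = β := by
  refine ⟨fun i _ => α i - β (i + 1), mem_pi.2 fun i _ => by simp, ?_⟩
  ext (_ | i)
  · rw [moveOf_zero, h.2, sum_attach α.support fun i => α i - β (i + 1)]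
  · have := h.1 i
    rw [moveOf_succ]
    split_ifs with hi
    · omega
    · rw [Finsupp.notMem_support_iff.1 hi] at this
      omega

lemma moveOf_injOn (α : ℕ →₀ ℕ) :
    Set.InjOn (moveOf α) (α.support.pi fun i => range (α i + 1)) := by
  intro Y hY Y' hY' hYY'
  funext i hi
  have hi' := congrArg (· (i + 1)) hYY'
  have h1 := mem_pi.1 hY i hi
  have h2 := mem_pi.1 hY' i hi
  simp only [moveOf_succ_of_mem _ _ hi, mem_range] at hi' h1 h2
  omega

lemma tsum_solTrans_mul_prod (p q : ℝ) (α : ℕ →₀ ℕ) (g : ℕ → ℕ → ℝ≥0∞) :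
    ∑' β, solTrans p q α β * ∏ i ∈ α.support, g i (β (i + 1))
      = ∏ i ∈ α.support, ∑ k ∈ range (α i + 1),
          binomPMF ⌈q * (α i : ℝ)⌉₊ p k * g i (α i - k) := by
  classical
  set P := α.support.pi fun i => range (α i + 1)
  have hzero : ∀ β ∉ P.image (moveOf α),
      solTrans p q α β * ∏ i ∈ α.support, g i (β (i + 1)) = 0 := by
    intro β hβ
    rw [solTrans_eq_ite, if_neg, zero_mul]
    intro hmove
    obtain ⟨Y, hY, rfl⟩ := hmove.exists_eq_moveOf
    exact hβ (mem_image_of_mem _ hY)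
  rw [tsum_eq_sum hzero, sum_image (moveOf_injOn α), prod_sum]
  refine sum_congr rfl fun Y hY => ?_
  rw [solTrans_eq_ite, if_pos (isMove_moveOf α hY), ← prod_mul_distrib, ← prod_attach]
  refine prod_congr rfl fun i _ => ?_
  have := mem_pi.1 hY i i.2
  simp only [mem_range] at this
  rw [moveOf_succ_of_mem _ _ i.2, Nat.sub_sub_self (by omega)]

variable {p q : ℝ}

lemma ceil_mul_le_self (hq1 : q ≤ 1) (a : ℕ) : ⌈q * (a : ℝ)⌉₊ ≤ a :=
  Nat.ceil_le.2 (mul_le_of_le_one_left a.cast_nonneg hq1)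

lemma tsum_solTrans (hp0 : 0 ≤ p) (hp1 : p ≤ 1) (hq1 : q ≤ 1) (α : ℕ →₀ ℕ) :
    ∑' β, solTrans p q α β = 1 := by
  simpa [sum_range_binomPMF hp0 hp1 (ceil_mul_le_self hq1 _)] using
    tsum_solTrans_mul_prod p q α fun _ _ => 1

lemma tsum_solTrans_mul_apply_succ_le (hp0 : 0 ≤ p) (hp1 : p ≤ 1) (hq1 : q ≤ 1)
    (α : ℕ →₀ ℕ) (i : ℕ) :
    ∑' β, solTrans p q α β * β (i + 1) ≤ ENNReal.ofReal (1 - p * q) * α i := by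
  classical
  by_cases hi : i ∈ α.support
  · have hprod (β : ℕ →₀ ℕ) : solTrans p q α β * β (i + 1)
        = solTrans p q α β * ∏ j ∈ α.support, if j = i then (β (j + 1) : ℝ≥0∞) else 1 := by
      rw [prod_ite_eq' α.support i, if_pos hi]
    rw [tsum_congr hprod,
      tsum_solTrans_mul_prod p q α fun j y => if j = i then (y : ℝ≥0∞) else 1, prod_eq_single i]
    · simpa using sum_range_binomPMF_mul_sub_le hp0 hp1 (ceil_mul_le_self hq1 _) (Nat.le_ceil _)
    · intro j _ hji
      simpa [hji] using sum_range_binomPMF hp0 hp1 (ceil_mul_le_self hq1 (α j))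
    · exact absurd hi
  · have hzero (β : ℕ →₀ ℕ) : solTrans p q α β * β (i + 1) = 0 := by
      by_cases hβ : solTrans p q α β = 0
      · rw [hβ, zero_mul]
      · have := (IsMove.of_solTrans_ne_zero hβ).1 i
        rw [Finsupp.notMem_support_iff.1 hi] at this
        simp [Nat.le_zero.1 this]
    simp [hzero]

end Solitaire

section TailMass

open Finset
open scoped ENNReal

def tailMass (J : ℕ) (α : ℕ →₀ ℕ) : ℕ :=
  ∑ i ∈ α.support with J ≤ i, α i

lemma tailMass_zero (α : ℕ →₀ ℕ) : tailMass 0 α = ∑ i ∈ α.support, α i := by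
  simp [tailMass]

lemma tailMass_le_tailMass_zero (J : ℕ) (α : ℕ →₀ ℕ) : tailMass J α ≤ tailMass 0 α :=
  sum_le_sum_of_subset fun i hi => by
    simp only [mem_filter] at hi ⊢
    exact ⟨hi.1, i.zero_le⟩

lemma tailMass_eq_sum_of_support_subset {J : ℕ} {α : ℕ →₀ ℕ} {s : Finset ℕ}
    (h : α.support ⊆ s) : tailMass J α = ∑ i ∈ s, if J ≤ i then α i else 0 := by
  rw [tailMass, sum_filter]
  exact sum_subset h fun i _ hi => by simp [Finsupp.notMem_support_iff.1 hi]

lemma pos_tailMass_of_lt_numParts {J : ℕ} {α : ℕ →₀ ℕ} (h : J < numParts α) :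
    0 < tailMass J α := by
  obtain ⟨i, hi, hJi⟩ := (Finset.lt_sup_iff (f := (· + 1))).1 h
  exact sum_pos' (fun _ _ => Nat.zero_le _)
    ⟨i, mem_filter.2 ⟨hi, by omega⟩, Nat.pos_of_ne_zero (Finsupp.mem_support_iff.1 hi)⟩

lemma IsMove.support_subset {α β : ℕ →₀ ℕ} (h : IsMove α β) :
    β.support ⊆ insert 0 (α.support.image (· + 1)) := by
  rintro (_ | i) hi
  · exact mem_insert_self _ _
  · refine mem_insert_of_mem (mem_image_of_mem _ (Finsupp.mem_support_iff.2 fun hα => ?_))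
    exact Finsupp.mem_support_iff.1 hi (Nat.le_zero.1 (hα ▸ h.1 i))

lemma IsMove.tailMass_succ {α β : ℕ →₀ ℕ} (h : IsMove α β) (J : ℕ) :
    tailMass (J + 1) β = ∑ i ∈ α.support with J ≤ i, β (i + 1) := by
  rw [tailMass_eq_sum_of_support_subset h.support_subset, sum_insert (by simp),
    sum_image (fun _ _ _ _ => Nat.add_right_cancel), sum_filter]
  simp

lemma IsMove.tailMass_zero {α β : ℕ →₀ ℕ} (h : IsMove α β) : tailMass 0 β = tailMass 0 α := by
  rw [tailMass_eq_sum_of_support_subset h.support_subset, sum_insert (by simp),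
    sum_image (fun _ _ _ _ => Nat.add_right_cancel), _root_.tailMass_zero]
  simp only [zero_le, if_true]
  rw [h.2, ← sum_add_distrib]
  exact sum_congr rfl fun i _ => Nat.sub_add_cancel (h.1 i)

variable {p q : ℝ}

lemma expectStep_tailMass_succ_le (hp0 : 0 ≤ p) (hp1 : p ≤ 1) (hq1 : q ≤ 1) (J : ℕ)
    (α : ℕ →₀ ℕ) :
    expectStep (solTrans p q) (fun β => tailMass (J + 1) β) α
      ≤ ENNReal.ofReal (1 - p * q) * tailMass J α := by
  calc expectStep (solTrans p q) (fun β => tailMass (J + 1) β) α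
      = ∑' β, solTrans p q α β * ∑ i ∈ α.support with J ≤ i, (β (i + 1) : ℝ≥0∞) := by
        refine tsum_congr fun β => ?_
        by_cases hβ : solTrans p q α β = 0
        · simp [hβ]
        · beta_reduce
          rw [(IsMove.of_solTrans_ne_zero hβ).tailMass_succ, Nat.cast_sum]
    _ = ∑ i ∈ α.support with J ≤ i, ∑' β, solTrans p q α β * β (i + 1) := by
        simp_rw [mul_sum]
        exact Summable.tsum_finsetSum fun _ _ => ENNReal.summable
    _ ≤ ∑ i ∈ α.support with J ≤ i, ENNReal.ofReal (1 - p * q) * α i :=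
        sum_le_sum fun i _ => tsum_solTrans_mul_apply_succ_le hp0 hp1 hq1 α i
    _ = ENNReal.ofReal (1 - p * q) * tailMass J α := by rw [← mul_sum, tailMass, Nat.cast_sum]

lemma expectStep_tailMass_zero (hp0 : 0 ≤ p) (hp1 : p ≤ 1) (hq1 : q ≤ 1) :
    expectStep (solTrans p q) (fun β => tailMass 0 β) = fun α => (tailMass 0 α : ℝ≥0∞) := by
  funext α
  calc expectStep (solTrans p q) (fun β => tailMass 0 β) α
      = ∑' β, solTrans p q α β * tailMass 0 α := by
        refine tsum_congr fun β => ?_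
        by_cases hβ : solTrans p q α β = 0
        · simp [hβ]
        · beta_reduce
          rw [(IsMove.of_solTrans_ne_zero hβ).tailMass_zero]
    _ = tailMass 0 α := by rw [ENNReal.tsum_mul_right, tsum_solTrans hp0 hp1 hq1, one_mul]

lemma iterate_expectStep_tailMass_le_tailMass_zero (hp0 : 0 ≤ p) (hp1 : p ≤ 1) (hq1 : q ≤ 1)
    (k J : ℕ) (α : ℕ →₀ ℕ) :
    (expectStep (solTrans p q))^[k] (fun β => tailMass J β) α ≤ tailMass 0 α := by
  calc (expectStep (solTrans p q))^[k] (fun β => tailMass J β) α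
      ≤ (expectStep (solTrans p q))^[k] (fun β => tailMass 0 β) α :=
        (expectStep_mono _).iterate k (fun β => by
          exact_mod_cast tailMass_le_tailMass_zero J β) α
    _ = tailMass 0 α := by
        rw [Function.iterate_fixed (expectStep_tailMass_zero hp0 hp1 hq1)]

lemma iterate_expectStep_tailMass_le (hp0 : 0 ≤ p) (hp1 : p ≤ 1) (hq1 : q ≤ 1) (k : ℕ) :
    ∀ (J : ℕ) (α : ℕ →₀ ℕ), (expectStep (solTrans p q))^[k] (fun β => tailMass J β) α
      ≤ ENNReal.ofReal (1 - p * q) ^ min J k * tailMass 0 α := by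
  induction k with
  | zero =>
    intro J α
    simpa using iterate_expectStep_tailMass_le_tailMass_zero hp0 hp1 hq1 0 J α
  | succ k ih =>
    rintro (_ | J) α
    · simpa using iterate_expectStep_tailMass_le_tailMass_zero hp0 hp1 hq1 (k + 1) 0 α
    set c := ENNReal.ofReal (1 - p * q)
    calc (expectStep (solTrans p q))^[k + 1] (fun β => tailMass (J + 1) β) α
        = (expectStep (solTrans p q))^[k]
            (expectStep (solTrans p q) fun β => tailMass (J + 1) β) α :=
          congrFun (Function.iterate_succ_apply _ _ _) α
      _ ≤ (expectStep (solTrans p q))^[k] (c • fun β => (tailMass J β : ℝ≥0∞)) α :=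
          (expectStep_mono _).iterate k (expectStep_tailMass_succ_le hp0 hp1 hq1 J) α
      _ = c * (expectStep (solTrans p q))^[k] (fun β => tailMass J β) α := by
          rw [iterate_expectStep_smul]
          rfl
      _ ≤ c * (c ^ min J k * tailMass 0 α) := mul_le_mul_right (ih J α) c
      _ = c ^ min (J + 1) (k + 1) * tailMass 0 α := by
          rw [Nat.succ_min_succ, pow_succ', mul_assoc]

lemma pathProb_exists_lt_numParts_le (hp0 : 0 ≤ p) (hp1 : p ≤ 1) (hq0 : 0 ≤ q) (hq1 : q ≤ 1)
    {x : ℝ} (hx : 0 ≤ x) (D M : ℕ) (a : ℕ →₀ ℕ) :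
    pathProb (solTrans p q) a (D + M)
        (fun ω => ∃ k, D + 1 ≤ k ∧ k ≤ D + M ∧ x < numParts (ω k))
      ≤ M * (ENNReal.ofReal (1 - p * q) ^ min ⌊x⌋₊ (D + 1) * tailMass 0 a) := by
  set c := ENNReal.ofReal (1 - p * q)
  have hc : c ≤ 1 := ENNReal.ofReal_le_one.2 (by nlinarith)
  calc pathProb (solTrans p q) a (D + M)
        (fun ω => ∃ k, D + 1 ≤ k ∧ k ≤ D + M ∧ x < numParts (ω k))
      ≤ ∑ k ∈ Icc (D + 1) (D + M),
          pathProb (solTrans p q) a (D + M) (fun ω => 1 ≤ (tailMass ⌊x⌋₊ (ω k) : ℝ≥0∞)) := by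
        refine pathProb_le_sum _ _ _ _ _ _ fun ω ⟨k, hk1, hk2, hk⟩ =>
          ⟨k, mem_Icc.2 ⟨hk1, hk2⟩, ?_⟩
        exact_mod_cast pos_tailMass_of_lt_numParts ((Nat.floor_lt hx).2 hk)
    _ ≤ ∑ k ∈ Icc (D + 1) (D + M), c ^ min ⌊x⌋₊ (D + 1) * tailMass 0 a := by
        refine sum_le_sum fun k hk => ?_
        obtain ⟨hk1, hk2⟩ := mem_Icc.1 hk
        calc _ ≤ (expectStep (solTrans p q))^[k] (fun β => tailMass ⌊x⌋₊ β) a :=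
              pathProb_one_le_apply_le _ (fun α => (tsum_solTrans hp0 hp1 hq1 α).le) _ k _ a hk2
          _ ≤ c ^ min ⌊x⌋₊ k * tailMass 0 a := iterate_expectStep_tailMass_le hp0 hp1 hq1 k _ a
          _ ≤ c ^ min ⌊x⌋₊ (D + 1) * tailMass 0 a := by
              gcongr ?_ * _
              exact pow_le_pow_right_of_le_one' hc (min_le_min_left _ hk1)
    _ = M * (c ^ min ⌊x⌋₊ (D + 1) * tailMass 0 a) := by
        rw [sum_const, Nat.card_Icc, nsmul_eq_mul, Nat.add_sub_add_right, Nat.add_sub_cancel_left]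

end TailMass

section Asymptotics

open scoped ENNReal

variable {p q : ℝ}

lemma one_sub_pow_le_exp_neg {x : ℝ} (hx : x ≤ 1) (t : ℕ) :
    (1 - x) ^ t ≤ Real.exp (-(x * t)) := by
  rw [mul_comm x, ← mul_neg, Real.exp_nat_mul]
  exact pow_le_pow_left₀ (by linarith) (Real.one_sub_le_exp_neg x) t

lemma one_le_log_of_three_le {n : ℕ} (hn : 3 ≤ n) : 1 ≤ Real.log n := by
  rw [Real.le_log_iff_exp_le (by positivity)]
  have h3 : (3 : ℝ) ≤ n := by exact_mod_cast hn
  linarith [Real.exp_one_lt_d9]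

lemma fourteen_mul_log_le_mul_min {ε : ℝ} (hp0 : 0 < p) (hp1 : p ≤ 1) (hq0 : 0 < q)
    (hq1 : q ≤ 1) {n : ℕ} (hn : 3 ≤ n) (hC : 15 * Real.log n ≤ ε * (p * q ^ 2 * n)) :
    14 * Real.log n ≤ p * q * min ⌊ε * (q * n)⌋₊ (⌈14 * Real.log n / (p * q)⌉₊ + 1) := by
  have hpq : 0 < p * q := mul_pos hp0 hq0
  have hL := one_le_log_of_three_le hn
  rw [Nat.cast_min, mul_min_of_nonneg _ _ hpq.le, le_min_iff]
  constructor
  · have hεqn : 0 ≤ ε * (q * n) := by nlinarith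
    have hfloor := Nat.sub_one_lt_floor (ε * (q * n))
    nlinarith [mul_le_one₀ hp1 hq0.le hq1]
  · have hceil := Nat.le_ceil (14 * Real.log n / (p * q))
    rw [div_le_iff₀ hpq] at hceil
    push_cast
    nlinarith

lemma natCeil_sq_div_le (hp0 : 0 < p) {n : ℕ} (hn : 1 ≤ n) (hpn : 1 ≤ p * n) :
    (⌈(n : ℝ) ^ 2 / p⌉₊ : ℝ) ≤ 2 * n ^ 3 := by
  have hn1 : (1 : ℝ) ≤ n := by exact_mod_cast hn
  have : (n : ℝ) ^ 2 / p ≤ n ^ 3 := by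
    rw [div_le_iff₀ hp0]
    nlinarith [pow_pos (by linarith : (0 : ℝ) < n) 2]
  nlinarith [Nat.ceil_lt_add_one (by positivity : (0 : ℝ) ≤ n ^ 2 / p), one_le_pow₀ hn1 (n := 3)]

lemma pathProb_exists_lt_numParts_le_two_div {ε : ℝ} (hp0 : 0 < p) (hp1 : p ≤ 1) (hq0 : 0 < q)
    (hq1 : q ≤ 1) (hε : 0 < ε) {n : ℕ} (hn : 3 ≤ n)
    (hC : (1 + 15 / ε) * Real.log n ≤ p * q ^ 2 * n) {a : ℕ →₀ ℕ} (ha : IsWeakComp n a) :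
    pathProb (solTrans p q) a (⌈14 * Real.log n / (p * q)⌉₊ + ⌈(n : ℝ) ^ 2 / p⌉₊)
        (fun ω => ∃ k : ℕ, ⌈14 * Real.log n / (p * q)⌉₊ + 1 ≤ k ∧
          k ≤ ⌈14 * Real.log n / (p * q)⌉₊ + ⌈(n : ℝ) ^ 2 / p⌉₊ ∧
          ε * (q * n) < (numParts (ω k) : ℝ))
      ≤ ENNReal.ofReal (2 / n) := by
  set L := Real.log n
  set D := ⌈14 * L / (p * q)⌉₊
  set M := ⌈(n : ℝ) ^ 2 / p⌉₊
  set t := min ⌊ε * (q * n)⌋₊ (D + 1)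
  have hn0 : (0 : ℝ) < n := by positivity
  have hL : 1 ≤ L := one_le_log_of_three_le hn
  have hpq1 : p * q ≤ 1 := mul_le_one₀ hp1 hq0.le hq1
  have hpqq : p * q ^ 2 ≤ p := by nlinarith [pow_le_one₀ hq0.le hq1 (n := 2)]
  have h15 : 15 * L ≤ ε * (p * q ^ 2 * n) := by
    rw [add_mul, div_mul_eq_mul_div, ← le_sub_iff_add_le', div_le_iff₀ hε] at hC
    nlinarith
  have hM : (M : ℝ) ≤ 2 * n ^ 3 :=
    natCeil_sq_div_le hp0 (by omega) (by nlinarith [div_pos (by norm_num : (0 : ℝ) < 15) hε])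
  have hdecay : (1 - p * q) ^ t ≤ ((n : ℝ) ^ 14)⁻¹ := by
    calc (1 - p * q) ^ t ≤ Real.exp (-(p * q * t)) := one_sub_pow_le_exp_neg hpq1 t
      _ ≤ Real.exp (-(14 * L)) :=
          Real.exp_le_exp.2 (neg_le_neg (fourteen_mul_log_le_mul_min hp0 hp1 hq0 hq1 hn h15))
      _ = ((n : ℝ) ^ 14)⁻¹ := by
          rw [Real.exp_neg,
            show 14 * L = Real.log ((n : ℝ) ^ 14) by rw [Real.log_pow]; norm_num [L],
            Real.exp_log (by positivity)]
  calc pathProb (solTrans p q) a (D + M) _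
      ≤ M * (ENNReal.ofReal (1 - p * q) ^ t * tailMass 0 a) :=
        pathProb_exists_lt_numParts_le hp0.le hp1 hq0.le hq1 (by positivity) D M a
    _ = ENNReal.ofReal (M * (1 - p * q) ^ t * n) := by
        rw [tailMass_zero, ha, ENNReal.ofReal_mul (by positivity),
          ENNReal.ofReal_mul (by positivity), ENNReal.ofReal_pow (by linarith),
          ENNReal.ofReal_natCast, ENNReal.ofReal_natCast, mul_assoc]
    _ ≤ ENNReal.ofReal (2 / n) := by
        refine ENNReal.ofReal_le_ofReal ?_
        calc (M : ℝ) * (1 - p * q) ^ t * n ≤ 2 * n ^ 3 * ((n : ℝ) ^ 14)⁻¹ * n := by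
              gcongr
          _ ≤ 2 / n := by
              rw [le_div_iff₀ hn0]
              field_simp
              exact one_le_pow₀ (by exact_mod_cast (by omega : 1 ≤ n))

end Asymptotics

theorem stmt5 (p q : ℕ → ℝ)
    (hp : ∀ n : ℕ, 2 ≤ n → 0 < p n ∧ p n ≤ 1) (hq : ∀ n : ℕ, 2 ≤ n → 0 < q n ∧ q n ≤ 1)
    (hinf : Tendsto (fun n : ℕ => p n * (q n) ^ 2 * n / Real.log n) atTop atTop)
    (α0 : (n : ℕ) → ℕ →₀ ℕ) (hα0 : ∀ n : ℕ, 2 ≤ n → IsWeakComp n (α0 n)) :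
    -- (1/(qₙn))·max{N(alpha^(D+1)),...,N(alpha^(D+M))} → 0 in probability, with
    -- D = ⌈14·log n/(pₙqₙ)⌉ and M = ⌈n²/pₙ⌉:
    ∀ ε : ℝ, 0 < ε →
      Tendsto (fun n : ℕ =>
          pathProb (solTrans (p n) (q n)) (α0 n)
            (⌈14 * Real.log n / (p n * q n)⌉₊ + ⌈(n : ℝ) ^ 2 / p n⌉₊)
            (fun ω => ∃ k : ℕ, ⌈14 * Real.log n / (p n * q n)⌉₊ + 1 ≤ k ∧
              k ≤ ⌈14 * Real.log n / (p n * q n)⌉₊ + ⌈(n : ℝ) ^ 2 / p n⌉₊ ∧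
              ε * (q n * n) < (numParts (ω k) : ℝ)))
        atTop (nhds 0) := by
  intro ε hε
  have hbound : ∀ᶠ n : ℕ in atTop, pathProb (solTrans (p n) (q n)) (α0 n)
      (⌈14 * Real.log n / (p n * q n)⌉₊ + ⌈(n : ℝ) ^ 2 / p n⌉₊)
      (fun ω => ∃ k : ℕ, ⌈14 * Real.log n / (p n * q n)⌉₊ + 1 ≤ k ∧
        k ≤ ⌈14 * Real.log n / (p n * q n)⌉₊ + ⌈(n : ℝ) ^ 2 / p n⌉₊ ∧
        ε * (q n * n) < (numParts (ω k) : ℝ)) ≤ ENNReal.ofReal (2 / n) := by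
    filter_upwards [hinf.eventually_ge_atTop (1 + 15 / ε), eventually_ge_atTop 3] with n hC hn
    rw [le_div_iff₀ (one_le_log_of_three_le hn |>.trans_lt' one_pos)] at hC
    exact pathProb_exists_lt_numParts_le_two_div (hp n (by omega)).1 (hp n (by omega)).2
      (hq n (by omega)).1 (hq n (by omega)).2 hε hn hC (hα0 n (by omega))
  have hlim : Tendsto (fun n : ℕ => ENNReal.ofReal (2 / n)) atTop (nhds 0) := by
    simpa using ENNReal.tendsto_ofReal (tendsto_const_div_atTop_nhds_zero_nat 2)
  exact tendsto_of_tendsto_of_tendsto_of_le_of_le' tendsto_const_nhds hlim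
    (Eventually.of_forall fun _ => zero_le) hbound
end

section
/- For each n ≥ 2 let 0 < p_n ≤ 1 and 0 < q_n ≤ 1 with p_n·q_n²·n/log n → ∞ as n → ∞, let α^{(0)} = α^{(0,n)} ∈ W(n) be an arbitrary initial configuration, and let (α^{(k)})_{k≥0} be the Markov chain B(n,p_n,q_n) started at α^{(0)}. Set D = ⌈14·log n/(p_n·q_n)⌉ and M = ⌈n²/p_n⌉. Then max_{D+1 ≤ k ≤ D+M} |α^{(k)}₁ − p_n·q_n·n| / (p_n·q_n·n) → 0 in probability as n → ∞, where α^{(k)}₁ denotes the size of the new pile created at move k. -/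
open Filter

/-!
Each move shrinks every existing pile by the factor `1 - pq` in expectation. Hence after
`D = ⌈14 log n / (pq)⌉` moves, a pile beyond position `D` (one created at least `D` moves earlier,
or an original pile) is nonempty with probability at most `2n (1 - pq)^D / (pq) ≤ 2n² · n⁻¹⁴`.
From a state whose piles all lie in positions `0, …, D`, the new pile is a sum of independent
binomials with `qn + O(D)` trials in total, so by a Chernoff bound it lies within a factor `1 ± ε`
of `pqn` except with probability `2 exp (-ε² pqn / 24) ≤ 2n⁻¹⁴`. A union bound over the
`M ≤ n³ + 1` moves of the window gives a failure probability of at most `1 / n`.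
-/

namespace BulgarianSolitaire

open Finset
open scoped Classical

noncomputable def ind (P : Prop) : ENNReal := if P then 1 else 0

lemma ind_of {P : Prop} (h : P) : ind P = 1 := if_pos h

lemma ind_of_not {P : Prop} (h : ¬P) : ind P = 0 := if_neg h

lemma ind_mono {P Q : Prop} (h : P → Q) : ind P ≤ ind Q := by
  by_cases hP : P
  · rw [ind_of hP, ind_of (h hP)]
  · rw [ind_of_not hP]; exact zero_le

lemma ind_le_of_one_le {P : Prop} {c : ENNReal} (h : P → 1 ≤ c) : ind P ≤ c := by
  by_cases hP : P
  · rw [ind_of hP]; exact h hP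
  · rw [ind_of_not hP]; exact zero_le

lemma ind_or_le (P Q : Prop) : ind (P ∨ Q) ≤ ind P + ind Q :=
  ind_le_of_one_le fun h => h.elim (fun hP => by simp [ind_of hP]) (fun hQ => by simp [ind_of hQ])

lemma ind_exists_le_sum {ι : Type*} (s : Finset ι) (A : ι → Prop) :
    ind (∃ i ∈ s, A i) ≤ ∑ i ∈ s, ind (A i) :=
  ind_le_of_one_le fun ⟨_, hi, hA⟩ =>
    (ind_of hA).symm.le.trans (single_le_sum (f := fun i => ind (A i)) (fun _ _ => zero_le) hi)

lemma ind_le_ofReal_exp {u : ℝ} : ind (0 ≤ u) ≤ ENNReal.ofReal (Real.exp u) :=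
  ind_le_of_one_le fun h => ENNReal.one_le_ofReal.mpr (Real.one_le_exp h)

section Binomial

variable {p : ℝ}

lemma sum_choose_mul_pow_mul_pow (p r : ℝ) (m : ℕ) :
    ∑ y ∈ range (m + 1), (m.choose y : ℝ) * p ^ y * (1 - p) ^ (m - y) * r ^ y
      = (1 - p + p * r) ^ m := by
  rw [show 1 - p + p * r = p * r + (1 - p) by ring, add_pow]
  exact sum_congr rfl fun y _ => by ring

lemma sum_choose_mul_pow_mul_pow_mul_self (p : ℝ) (m : ℕ) :
    ∑ y ∈ range (m + 1), (m.choose y : ℝ) * p ^ y * (1 - p) ^ (m - y) * y = m * p := by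
  cases m with
  | zero => simp
  | succ m =>
    have hchoose (y : ℕ) : ((m + 1).choose (y + 1) : ℝ) * (y + 1) = (m + 1) * m.choose y := by
      exact_mod_cast (Nat.add_one_mul_choose_eq m y).symm
    rw [sum_range_succ', Nat.cast_zero, mul_zero, add_zero]
    calc ∑ y ∈ range (m + 1),
          ((m + 1).choose (y + 1) : ℝ) * p ^ (y + 1) * (1 - p) ^ (m + 1 - (y + 1)) * ↑(y + 1)
        = ∑ y ∈ range (m + 1), ((m + 1) * p) * ((m.choose y : ℝ) * p ^ y * (1 - p) ^ (m - y)) :=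
          sum_congr rfl fun y _ => by
            rw [Nat.add_sub_add_right, Nat.cast_succ]
            linear_combination (p ^ (y + 1) * (1 - p) ^ (m - y)) * hchoose y
      _ = ((m + 1 : ℕ) : ℝ) * p := by
          rw [← mul_sum]
          simpa using congrArg (((m : ℝ) + 1) * p * ·) (sum_choose_mul_pow_mul_pow p 1 m)

lemma binomPMF_eq_zero_of_lt {m y : ℕ} (h : m < y) : binomPMF m p y = 0 := by
  simp [binomPMF, Nat.choose_eq_zero_of_lt h]

lemma sum_binomPMF_mul_eq_ofReal (hp0 : 0 ≤ p) (hp1 : p ≤ 1) {m M : ℕ} (hm : m ≤ M)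
    (g : ℕ → ℝ) (hg : ∀ y ≤ m, 0 ≤ g y) :
    ∑ y ∈ range (M + 1), binomPMF m p y * ENNReal.ofReal (g y)
      = ENNReal.ofReal
          (∑ y ∈ range (m + 1), (m.choose y : ℝ) * p ^ y * (1 - p) ^ (m - y) * g y) := by
  have h1p : 0 ≤ 1 - p := by linarith
  rw [← sum_subset (range_subset_range.mpr (by omega : m + 1 ≤ M + 1)) fun y _ hy => by
      rw [binomPMF_eq_zero_of_lt (by simpa using hy), zero_mul],
    ENNReal.ofReal_sum_of_nonneg fun y hy => by
      have := hg y (Nat.lt_succ_iff.mp (mem_range.mp hy)); positivity]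
  exact sum_congr rfl fun y hy => by
    rw [binomPMF, ← ENNReal.ofReal_mul (by positivity)]

lemma sum_binomPMF_mul_pow (hp0 : 0 ≤ p) (hp1 : p ≤ 1) {r : ℝ} (hr : 0 ≤ r) {m M : ℕ}
    (hm : m ≤ M) :
    ∑ y ∈ range (M + 1), binomPMF m p y * ENNReal.ofReal (r ^ y)
      = ENNReal.ofReal ((1 - p + p * r) ^ m) := by
  rw [sum_binomPMF_mul_eq_ofReal hp0 hp1 hm _ fun y _ => by positivity,
    sum_choose_mul_pow_mul_pow]

lemma sum_binomPMF (hp0 : 0 ≤ p) (hp1 : p ≤ 1) {m M : ℕ} (hm : m ≤ M) :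
    ∑ y ∈ range (M + 1), binomPMF m p y = 1 := by
  simpa using sum_binomPMF_mul_pow hp0 hp1 zero_le_one hm

lemma sum_binomPMF_mul_sub (hp0 : 0 ≤ p) (hp1 : p ≤ 1) {m M : ℕ} (hm : m ≤ M) :
    ∑ y ∈ range (M + 1), binomPMF m p y * ((M - y : ℕ) : ENNReal)
      = ENNReal.ofReal (M - m * p) := by
  have hsub : ∀ y ∈ range (M + 1), ((M - y : ℕ) : ENNReal) = ENNReal.ofReal ((M : ℝ) - y) :=
    fun y hy => by
      rw [← ENNReal.ofReal_natCast, Nat.cast_sub (Nat.lt_succ_iff.mp (mem_range.mp hy))]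
  rw [sum_congr rfl fun y hy => by rw [hsub y hy],
    sum_binomPMF_mul_eq_ofReal hp0 hp1 hm _ fun y hy => by
      have : (y : ℝ) ≤ M := by exact_mod_cast hy.trans hm
      linarith]
  congr 1
  simp only [mul_sub, sum_sub_distrib, ← sum_mul, sum_choose_mul_pow_mul_pow_mul_self]
  simpa using congrArg (· * (M : ℝ)) (sum_choose_mul_pow_mul_pow p 1 m)

end Binomial

section Transition

variable (x : ℕ →₀ ℕ)

noncomputable def nextState (Y : x.support → ℕ) : ℕ →₀ ℕ :=
  Finsupp.single 0 (∑ i, Y i) + ∑ i : x.support, Finsupp.single ((i : ℕ) + 1) (x i - Y i)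

noncomputable def removals : Finset (x.support → ℕ) :=
  Fintype.piFinset fun i => range (x i + 1)

/-- The new pile is binomial with this many trials. -/
noncomputable def numCandidates (q : ℝ) : ℕ := ∑ i ∈ x.support, ⌈q * (x i : ℝ)⌉₊

variable {x}

lemma nextState_zero (Y : x.support → ℕ) : nextState x Y 0 = ∑ i, Y i := by
  simp [nextState]

lemma nextState_succ (Y : x.support → ℕ) (i : x.support) :
    nextState x Y ((i : ℕ) + 1) = x i - Y i := by
  rw [nextState, Finsupp.add_apply, Finsupp.finsetSum_apply, Finsupp.single_apply,
    if_neg (by omega), zero_add, sum_eq_single i (fun i' _ hne => Finsupp.single_eq_of_ne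
      fun h => hne (Subtype.ext (by omega))) (by simp)]
  simp

lemma nextState_succ_of_notMem (Y : x.support → ℕ) {j : ℕ} (hj : j ∉ x.support) :
    nextState x Y (j + 1) = 0 := by
  rw [nextState, Finsupp.add_apply, Finsupp.finsetSum_apply, Finsupp.single_apply,
    if_neg (by omega), zero_add]
  refine sum_eq_zero fun i _ => Finsupp.single_eq_of_ne ?_
  rintro h
  exact hj (Nat.succ_injective h ▸ i.2)

lemma le_of_mem_removals {Y : x.support → ℕ} (hY : Y ∈ removals x) (i : x.support) :
    Y i ≤ x i :=
  Nat.lt_succ_iff.mp (mem_range.mp (Fintype.mem_piFinset.mp hY i))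

lemma nextState_injOn : Set.InjOn (nextState x) (removals x) := fun Y hY Y' hY' h => by
  funext i
  have h1 := nextState_succ Y i
  rw [h, nextState_succ] at h1
  have := le_of_mem_removals hY i
  have := le_of_mem_removals hY' i
  omega

variable (p q : ℝ)

lemma solTrans_nextState {Y : x.support → ℕ} (hY : Y ∈ removals x) :
    solTrans p q x (nextState x Y) = ∏ i : x.support, binomPMF ⌈q * (x i : ℝ)⌉₊ p (Y i) := by
  have hsub (i : x.support) : x i - nextState x Y (i + 1) = Y i := by
    rw [nextState_succ, Nat.sub_sub_self (le_of_mem_removals hY i)]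
  rw [solTrans, if_pos]
  · rw [← prod_coe_sort]
    exact prod_congr rfl fun i _ => by rw [hsub]
  refine ⟨fun i => ?_, ?_⟩
  · by_cases hi : i ∈ x.support
    · exact (nextState_succ Y ⟨i, hi⟩).trans_le (Nat.sub_le _ _)
    · simp [nextState_succ_of_notMem Y hi]
  · rw [nextState_zero, ← sum_coe_sort x.support]
    exact sum_congr rfl fun i _ => (hsub i).symm

lemma exists_nextState_of_solTrans_ne_zero {b : ℕ →₀ ℕ} (h : solTrans p q x b ≠ 0) :
    ∃ Y ∈ removals x, nextState x Y = b := by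
  obtain ⟨hle, h0⟩ : (∀ i, b (i + 1) ≤ x i) ∧ b 0 = ∑ i ∈ x.support, (x i - b (i + 1)) := by
    by_contra hc
    exact h (by rw [solTrans, if_neg hc])
  refine ⟨fun i => x i - b ((i : ℕ) + 1),
    Fintype.mem_piFinset.mpr fun i => mem_range.mpr (by omega), ?_⟩
  ext (_ | j)
  · rw [nextState_zero, h0, ← sum_coe_sort x.support]
  · by_cases hj : j ∈ x.support
    · rw [nextState_succ _ ⟨j, hj⟩, Nat.sub_sub_self (hle j)]
    · have := hle j
      rw [nextState_succ_of_notMem _ hj]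
      simp_all

lemma tsum_solTrans_mul (f : (ℕ →₀ ℕ) → ENNReal) :
    ∑' b, solTrans p q x b * f b
      = ∑ Y ∈ removals x,
          (∏ i : x.support, binomPMF ⌈q * (x i : ℝ)⌉₊ p (Y i)) * f (nextState x Y) := by
  rw [tsum_eq_sum (s := (removals x).image (nextState x)) fun b hb => by
      by_contra h
      obtain ⟨Y, hY, rfl⟩ := exists_nextState_of_solTrans_ne_zero p q (left_ne_zero_of_mul h)
      exact hb (mem_image_of_mem _ hY),
    sum_image nextState_injOn]
  exact sum_congr rfl fun Y hY => by rw [solTrans_nextState p q hY]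

variable {p q}

lemma ceil_mul_le_self (hq1 : q ≤ 1) (k : ℕ) : ⌈q * (k : ℝ)⌉₊ ≤ k :=
  Nat.ceil_le.mpr (mul_le_of_le_one_left (Nat.cast_nonneg k) hq1)

lemma tsum_solTrans_mul_pow (hp0 : 0 ≤ p) (hp1 : p ≤ 1) (hq1 : q ≤ 1) {r : ℝ} (hr : 0 ≤ r) :
    ∑' b, solTrans p q x b * ENNReal.ofReal (r ^ b 0)
      = ENNReal.ofReal ((1 - p + p * r) ^ numCandidates x q) := by
  have hbase : 0 ≤ 1 - p + p * r := by nlinarith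
  rw [tsum_solTrans_mul]
  calc _ = ∑ Y ∈ removals x, ∏ i : x.support,
          binomPMF ⌈q * (x i : ℝ)⌉₊ p (Y i) * ENNReal.ofReal (r ^ Y i) := by
        refine sum_congr rfl fun Y _ => ?_
        rw [nextState_zero, prod_mul_distrib,
          ← ENNReal.ofReal_prod_of_nonneg fun _ _ => by positivity, prod_pow_eq_pow_sum]
    _ = ∏ i : x.support, ENNReal.ofReal ((1 - p + p * r) ^ ⌈q * (x i : ℝ)⌉₊) := by
        rw [removals, ← prod_univ_sum (fun i : x.support => range (x i + 1))
          fun i y => binomPMF ⌈q * (x i : ℝ)⌉₊ p y * ENNReal.ofReal (r ^ y)]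
        exact prod_congr rfl fun i _ =>
          sum_binomPMF_mul_pow hp0 hp1 hr (ceil_mul_le_self hq1 _)
    _ = _ := by
        rw [← ENNReal.ofReal_prod_of_nonneg fun _ _ => by positivity, prod_pow_eq_pow_sum,
          numCandidates, ← sum_coe_sort x.support]

lemma tsum_solTrans (hp0 : 0 ≤ p) (hp1 : p ≤ 1) (hq1 : q ≤ 1) :
    ∑' b, solTrans p q x b = 1 := by
  simpa using tsum_solTrans_mul_pow (x := x) hp0 hp1 hq1 zero_le_one

lemma tsum_solTrans_mul_succ_le (hp0 : 0 ≤ p) (hp1 : p ≤ 1) (hq1 : q ≤ 1) (j : ℕ) :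
    ∑' b, solTrans p q x b * (b (j + 1) : ENNReal) ≤ ENNReal.ofReal (1 - p * q) * x j := by
  by_cases hj : j ∈ x.support
  swap
  · simp [tsum_solTrans_mul, nextState_succ_of_notMem _ hj]
  set m := ⌈q * (x j : ℝ)⌉₊
  have hm : m ≤ x j := ceil_mul_le_self hq1 _
  rw [tsum_solTrans_mul]
  calc _ = ∑ Y ∈ removals x, ∏ i : x.support, binomPMF ⌈q * (x i : ℝ)⌉₊ p (Y i)
          * (if i = ⟨j, hj⟩ then ((x i - Y i : ℕ) : ENNReal) else 1) := by
        refine sum_congr rfl fun Y _ => ?_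
        rw [prod_mul_distrib, Fintype.prod_ite_eq', nextState_succ Y ⟨j, hj⟩]
    _ = ∏ i : x.support, ∑ y ∈ range (x i + 1), binomPMF ⌈q * (x i : ℝ)⌉₊ p y
          * (if i = ⟨j, hj⟩ then ((x i - y : ℕ) : ENNReal) else 1) := by
        rw [removals, ← prod_univ_sum (fun i : x.support => range (x i + 1)) fun i y =>
          binomPMF ⌈q * (x i : ℝ)⌉₊ p y * (if i = ⟨j, hj⟩ then ((x i - y : ℕ) : ENNReal) else 1)]
    _ = ∑ y ∈ range (x j + 1), binomPMF m p y * ((x j - y : ℕ) : ENNReal) := by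
        rw [Fintype.prod_eq_single ⟨j, hj⟩ fun i hi => by
          simpa [hi] using sum_binomPMF hp0 hp1 (ceil_mul_le_self hq1 (x i))]
        simp [m]
    _ = ENNReal.ofReal (x j - m * p) := sum_binomPMF_mul_sub hp0 hp1 hm
    _ ≤ ENNReal.ofReal ((1 - p * q) * x j) := by
        refine ENNReal.ofReal_le_ofReal ?_
        have : q * (x j : ℝ) ≤ m := Nat.le_ceil _
        nlinarith
    _ ≤ _ := by rw [ENNReal.ofReal_mul' (Nat.cast_nonneg _), ENNReal.ofReal_natCast]

lemma sum_eq_of_solTrans_ne_zero {b : ℕ →₀ ℕ} (h : solTrans p q x b ≠ 0) :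
    ∑ i ∈ b.support, b i = ∑ i ∈ x.support, x i := by
  obtain ⟨Y, hY, rfl⟩ := exists_nextState_of_solTrans_ne_zero p q h
  have hsub : (nextState x Y).support ⊆ insert 0 (x.support.image (· + 1)) := by
    intro i hi
    rcases i with _ | i
    · exact mem_insert_self _ _
    · refine mem_insert_of_mem (mem_image_of_mem _ ?_)
      by_contra hni
      exact Finsupp.mem_support_iff.mp hi (nextState_succ_of_notMem Y hni)
  rw [sum_subset hsub fun i _ hi => Finsupp.notMem_support_iff.mp hi,
    sum_insert (by simp), sum_image (by simp), nextState_zero,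
    ← sum_coe_sort x.support, ← sum_coe_sort x.support, ← sum_add_distrib]
  exact sum_congr rfl fun i _ => by
    rw [nextState_succ, Nat.add_sub_cancel' (le_of_mem_removals hY i)]

lemma pos_of_solTrans_ne_zero {b : ℕ →₀ ℕ} (h : solTrans p q x b ≠ 0) {j : ℕ}
    (hj : b (j + 1) ≠ 0) : x j ≠ 0 := by
  obtain ⟨Y, -, rfl⟩ := exists_nextState_of_solTrans_ne_zero p q h
  exact fun hx => hj (nextState_succ_of_notMem Y (Finsupp.notMem_support_iff.mpr hx))

end Transition

section Path

variable {S : Type*} (T : S → S → ENNReal)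

/-- The expectation counterpart of `pathProb`. -/
noncomputable def pathExpect (a : S) (m : ℕ) (f : (ℕ → S) → ENNReal) : ENNReal :=
  ∑' ω : {ω : ℕ → S // ω 0 = a ∧ ∀ j, m ≤ j → ω (j + 1) = ω j},
    f ω.1 * ∏ k ∈ range m, T (ω.1 k) (ω.1 (k + 1))

def IsPath (a : S) (m : ℕ) (ω : ℕ → S) : Prop :=
  ω 0 = a ∧ ∀ k < m, T (ω k) (ω (k + 1)) ≠ 0

variable {T}

def cons (a : S) (ω : ℕ → S) : ℕ → S
  | 0 => a
  | k + 1 => ω k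

@[simp] lemma cons_zero (a : S) (ω : ℕ → S) : cons a ω 0 = a := rfl

@[simp] lemma cons_succ (a : S) (ω : ℕ → S) (k : ℕ) : cons a ω (k + 1) = ω k := rfl

lemma IsPath.invariant {a : S} {m : ℕ} {ω : ℕ → S} (hω : IsPath T a m ω) (P : ℕ → S → Prop)
    (h0 : P 0 a) (hstep : ∀ t x b, P t x → T x b ≠ 0 → P (t + 1) b) {k : ℕ} (hk : k ≤ m) :
    P k (ω k) := by
  induction k with
  | zero => exact hω.1 ▸ h0
  | succ k ih => exact hstep k _ _ (ih (by omega)) (hω.2 k (by omega))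

lemma pathProb_le_pathExpect (a : S) (m : ℕ) (E : (ℕ → S) → Prop) :
    pathProb T a m E ≤ pathExpect T a m fun ω => ind (E ω) :=
  Summable.tsum_le_tsum_of_inj (fun ω => ⟨ω.1, ω.2.1, ω.2.2.1⟩)
    (fun _ _ h => Subtype.ext (congrArg Subtype.val h :)) (fun _ _ => zero_le)
    (fun ω => by simp [ind_of ω.2.2.2]) ENNReal.summable ENNReal.summable

lemma pathProb_mono {a : S} {m : ℕ} {E E' : (ℕ → S) → Prop} (h : ∀ ω, E ω → E' ω) :
    pathProb T a m E ≤ pathProb T a m E' :=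
  Summable.tsum_le_tsum_of_inj (fun ω => ⟨ω.1, ω.2.1, ω.2.2.1, h _ ω.2.2.2⟩)
    (fun _ _ h => Subtype.ext (congrArg Subtype.val h :)) (fun _ _ => zero_le)
    (fun _ => le_rfl) ENNReal.summable ENNReal.summable

lemma pathExpect_mono {a : S} {m : ℕ} {f g : (ℕ → S) → ENNReal}
    (h : ∀ ω, IsPath T a m ω → f ω ≤ g ω) : pathExpect T a m f ≤ pathExpect T a m g := by
  refine ENNReal.tsum_le_tsum fun ω => ?_
  by_cases hω : IsPath T a m ω.1
  · exact mul_le_mul_left (h _ hω) _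
  · obtain ⟨k, hk, hT⟩ : ∃ k ∈ range m, T (ω.1 k) (ω.1 (k + 1)) = 0 := by
      by_contra hc
      push Not at hc
      exact hω ⟨ω.2.1, fun k hk => hc k (mem_range.mpr hk)⟩
    simp [prod_eq_zero (f := fun k => T (ω.1 k) (ω.1 (k + 1))) hk hT]

lemma pathExpect_add (a : S) (m : ℕ) (f g : (ℕ → S) → ENNReal) :
    pathExpect T a m (fun ω => f ω + g ω) = pathExpect T a m f + pathExpect T a m g := by
  simp only [pathExpect, add_mul, ENNReal.tsum_add]

lemma pathExpect_sum (a : S) (m : ℕ) {ι : Type*} (s : Finset ι) (f : ι → (ℕ → S) → ENNReal) :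
    pathExpect T a m (fun ω => ∑ i ∈ s, f i ω) = ∑ i ∈ s, pathExpect T a m (f i) := by
  simp only [pathExpect, sum_mul]
  exact Summable.tsum_finsetSum fun _ _ => ENNReal.summable

lemma pathExpect_zero (a : S) (f : (ℕ → S) → ENNReal) :
    pathExpect T a 0 f = f fun _ => a := by
  have hconst (ω : {ω : ℕ → S // ω 0 = a ∧ ∀ j, 0 ≤ j → ω (j + 1) = ω j}) :
      ω.1 = fun _ => a := by
    funext k
    induction k with
    | zero => exact ω.2.1
    | succ k ih => rw [ω.2.2 k k.zero_le, ih]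
  rw [pathExpect, tsum_eq_single ⟨fun _ => a, rfl, fun _ _ => rfl⟩ fun ω hω =>
    absurd (Subtype.ext (hconst ω)) hω]
  simp

/-- The Markov property at time one. -/
lemma pathExpect_succ (a : S) (m : ℕ) (f : (ℕ → S) → ENNReal) :
    pathExpect T a (m + 1) f = ∑' b, T a b * pathExpect T b m fun ω => f (cons a ω) := by
  let e : (Σ b : S, {ω : ℕ → S // ω 0 = b ∧ ∀ j, m ≤ j → ω (j + 1) = ω j})
      ≃ {ω : ℕ → S // ω 0 = a ∧ ∀ j, m + 1 ≤ j → ω (j + 1) = ω j} :=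
    { toFun := fun σ => ⟨cons a σ.2.1, rfl, fun j hj => by
        obtain ⟨j, rfl⟩ : ∃ j', j = j' + 1 := ⟨j - 1, by omega⟩
        exact σ.2.2.2 j (by omega)⟩
      invFun := fun ω => ⟨ω.1 1, fun k => ω.1 (k + 1), rfl, fun j hj => ω.2.2 (j + 1) (by omega)⟩
      left_inv := fun ⟨b, ω, h0, _⟩ => by subst h0; rfl
      right_inv := fun ⟨ω, h0, _⟩ => Subtype.ext <| funext fun k => by
        cases k
        · exact h0.symm
        · rfl }
  simp only [pathExpect, ← ENNReal.tsum_mul_left]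
  rw [← ENNReal.tsum_sigma' fun σ : Σ b : S, {ω : ℕ → S // ω 0 = b ∧ ∀ j, m ≤ j → ω (j + 1) = ω j}
    => T a σ.1 * (f (cons a σ.2.1) * ∏ k ∈ range m, T (σ.2.1 k) (σ.2.1 (k + 1))), ← e.tsum_eq]
  refine tsum_congr fun ⟨b, ω, h0, _⟩ => ?_
  subst h0
  simp only [e, Equiv.coe_fn_mk, prod_range_succ', cons_zero, cons_succ]
  ring

/-- The Markov property at time `k`. -/
lemma pathExpect_shift (a : S) (k m : ℕ) (g : (ℕ → S) → ENNReal) :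
    pathExpect T a (k + m) (fun ω => g fun t => ω (t + k))
      = pathExpect T a k fun ω => pathExpect T (ω k) m g := by
  induction k generalizing a with
  | zero => rw [pathExpect_zero, zero_add]; rfl
  | succ k ih =>
    rw [Nat.succ_add, pathExpect_succ, pathExpect_succ]
    exact tsum_congr fun b => by simp only [cons_succ]; rw [← ih]; rfl

lemma pathExpect_apply_zero (hT : ∀ x, ∑' b, T x b = 1) (h : S → ENNReal) (a : S) (m : ℕ) :
    pathExpect T a m (fun ω => h (ω 0)) = h a := by
  induction m generalizing a h with
  | zero => rw [pathExpect_zero]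
  | succ m ih =>
    simp only [pathExpect_succ, cons_zero]
    simp_rw [fun b => ih (fun _ => h a) b, ENNReal.tsum_mul_right, hT, one_mul]

lemma pathExpect_le_const (hT : ∀ x, ∑' b, T x b = 1) {a : S} {m : ℕ} {f : (ℕ → S) → ENNReal}
    {c : ENNReal} (h : ∀ ω, IsPath T a m ω → f ω ≤ c) : pathExpect T a m f ≤ c :=
  (pathExpect_mono h).trans_eq (pathExpect_apply_zero hT (fun _ => c) a m)

lemma pathExpect_step_le (hT : ∀ x, ∑' b, T x b = 1) {φ : S → S → ENNReal} {c : ENNReal}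
    (hφ : ∀ x, ∑' b, T x b * φ x b ≤ c) (a : S) {k m : ℕ} (hk : k < m) :
    pathExpect T a m (fun ω => φ (ω k) (ω (k + 1))) ≤ c := by
  obtain ⟨m, rfl⟩ := Nat.exists_eq_add_of_lt hk
  have h := pathExpect_shift (T := T) a k (m + 1) fun ω => φ (ω 0) (ω 1)
  simp only [zero_add, Nat.add_comm 1 k] at h
  rw [add_assoc, h]
  refine pathExpect_le_const hT fun ω _ => ?_
  rw [pathExpect_succ]
  simp only [cons_zero, cons_succ]
  simp_rw [fun b => pathExpect_apply_zero hT (φ (ω k)) b]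
  exact hφ _

end Path

section Decay

variable {T : (ℕ →₀ ℕ) → (ℕ →₀ ℕ) → ENNReal} {r : ENNReal}

lemma pathExpect_apply_add_le_pow_mul (hT : ∀ x, ∑' b, T x b = 1)
    (hr : ∀ x j, ∑' b, T x b * (b (j + 1) : ENNReal) ≤ r * x j)
    (a : ℕ →₀ ℕ) {t m : ℕ} (ht : t ≤ m) (j : ℕ) :
    pathExpect T a m (fun ω => (ω t (j + t) : ENNReal)) ≤ r ^ t * a j := by
  induction t generalizing a m j with
  | zero => simpa using (pathExpect_apply_zero hT (fun x => (x j : ENNReal)) a m).le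
  | succ t ih =>
    obtain ⟨m, rfl⟩ : ∃ m', m = m' + 1 := ⟨m - 1, by omega⟩
    rw [pathExpect_succ]
    calc _ ≤ ∑' b, T a b * (r ^ t * b (j + 1)) := ENNReal.tsum_le_tsum fun b => by
          gcongr
          have h := ih b (m := m) (by omega) (j + 1)
          rw [Nat.add_right_comm] at h
          exact h
      _ = r ^ t * ∑' b, T a b * b (j + 1) := by
          rw [← ENNReal.tsum_mul_left]
          exact tsum_congr fun b => by ring
      _ ≤ r ^ t * (r * a j) := by gcongr; exact hr a j
      _ = r ^ (t + 1) * a j := by ring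

end Decay

section Solitaire

variable {p q : ℝ} {a : ℕ →₀ ℕ} {m : ℕ} {ω : ℕ → ℕ →₀ ℕ}

lemma IsPath.sum_eq (hω : IsPath (solTrans p q) a m ω) {k : ℕ} (hk : k ≤ m) :
    ∑ i ∈ (ω k).support, ω k i = ∑ i ∈ a.support, a i :=
  hω.invariant (fun _ x => ∑ i ∈ x.support, x i = ∑ i ∈ a.support, a i) rfl
    (fun _ _ _ hx h => (sum_eq_of_solTrans_ne_zero h).trans hx) hk

lemma IsPath.apply_le (hω : IsPath (solTrans p q) a m ω) {k : ℕ} (hk : k ≤ m) (i : ℕ) :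
    ω k i ≤ ∑ i ∈ a.support, a i := by
  rw [← hω.sum_eq hk]
  by_cases hi : i ∈ (ω k).support
  · exact single_le_sum (f := fun i => ω k i) (fun _ _ => Nat.zero_le _) hi
  · simp [Finsupp.notMem_support_iff.mp hi]

lemma IsPath.apply_eq_zero (hω : IsPath (solTrans p q) a m ω) {k : ℕ} (hk : k ≤ m) {i : ℕ}
    (hi : k < i) (ha : a (i - k) = 0) : ω k i = 0 := by
  refine hω.invariant (fun t x => ∀ i, t < i → a (i - t) = 0 → x i = 0) (fun i _ => id)
    (fun t x b hx h i hi ha => ?_) hk i hi ha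
  obtain ⟨j, rfl⟩ : ∃ j, i = j + 1 := ⟨i - 1, by omega⟩
  by_contra hb
  exact pos_of_solTrans_ne_zero h hb
    (hx j (by omega) (by rwa [show j - t = j + 1 - (t + 1) by omega]))

lemma IsPath.ind_exists_pile_gt_le (hω : IsPath (solTrans p q) a m ω) {D k : ℕ} (hk : k ≤ m) :
    ind (∃ i, D < i ∧ ω k i ≠ 0)
      ≤ ∑ i ∈ Ioc D k, (ω k i : ENNReal) + ∑ j ∈ a.support, (ω k (j + k) : ENNReal) := by
  refine ind_le_of_one_le fun ⟨i, hDi, hi⟩ => ?_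
  have h1 : (1 : ENNReal) ≤ ω k i := Nat.one_le_cast.mpr (Nat.one_le_iff_ne_zero.mpr hi)
  by_cases hik : i ≤ k
  · exact h1.trans <| (single_le_sum (f := fun i => (ω k i : ENNReal)) (fun _ _ => zero_le)
      (mem_Ioc.mpr ⟨hDi, hik⟩)).trans le_self_add
  · have ha : a (i - k) ≠ 0 := fun ha => hi (hω.apply_eq_zero hk (by omega) ha)
    have h2 := single_le_sum (f := fun j => (ω k (j + k) : ENNReal)) (fun _ _ => zero_le)
      (Finsupp.mem_support_iff.mpr ha)
    rw [Nat.sub_add_cancel (by omega)] at h2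
    exact h1.trans (h2.trans le_add_self)

lemma sum_Ioc_pow_le (r : ENNReal) (D k : ℕ) : ∑ i ∈ Ioc D k, r ^ i ≤ r ^ D * (1 - r)⁻¹ :=
  calc ∑ i ∈ Ioc D k, r ^ i ≤ ∑ i ∈ Ico D (k + 1), r ^ i :=
        sum_le_sum_of_subset fun i hi => by simp only [mem_Ioc, mem_Ico] at hi ⊢; omega
    _ = r ^ D * ∑ i ∈ range (k + 1 - D), r ^ i := by
        rw [sum_Ico_eq_sum_range, mul_sum]
        simp [pow_add]
    _ ≤ r ^ D * (1 - r)⁻¹ := by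
        gcongr
        exact (ENNReal.sum_le_tsum _).trans_eq (ENNReal.tsum_geometric r)

variable (hp0 : 0 ≤ p) (hp1 : p ≤ 1) (hq1 : q ≤ 1)
include hp0 hp1 hq1

lemma pathExpect_pile_le {n : ℕ} (ha : ∑ i ∈ a.support, a i = n) {i k : ℕ} (hi : i ≤ k)
    (hk : k ≤ m) :
    pathExpect (solTrans p q) a m (fun ω => (ω k i : ENNReal))
      ≤ ENNReal.ofReal (1 - p * q) ^ i * n := by
  have hT : ∀ x, ∑' b, solTrans p q x b = 1 := fun x => tsum_solTrans hp0 hp1 hq1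
  obtain ⟨s, rfl⟩ := Nat.exists_eq_add_of_le hi
  obtain ⟨m, rfl⟩ := Nat.exists_eq_add_of_le (show s ≤ m by omega)
  have h := pathExpect_shift (T := solTrans p q) a s m fun ω => (ω i (0 + i) : ENNReal)
  simp only [zero_add] at h
  rw [h]
  refine (pathExpect_mono (g := fun ω : ℕ → ℕ →₀ ℕ => ENNReal.ofReal (1 - p * q) ^ i * ω s 0)
    fun ω _ => ?_).trans (pathExpect_le_const hT fun ω hω => ?_)
  · have hdecay := pathExpect_apply_add_le_pow_mul hT
      (fun x j => tsum_solTrans_mul_succ_le hp0 hp1 hq1 j) (ω s) (show i ≤ m by omega) 0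
    rwa [zero_add] at hdecay
  · have hle : ω s 0 ≤ n := ha ▸ hω.apply_le le_rfl 0
    gcongr

/-- A nonempty pile beyond position `D` at time `k ≥ D` is either a pile created at least `D`
moves earlier or an original pile moved `k` times; each move shrinks a pile by the factor `1 - pq`
in expectation. -/
lemma pathExpect_exists_pile_gt_le (hq0 : 0 ≤ q) {n : ℕ} (ha : ∑ i ∈ a.support, a i = n)
    {D k : ℕ} (hD : D ≤ k) (hk : k ≤ m) :
    pathExpect (solTrans p q) a m (fun ω => ind (∃ i, D < i ∧ ω k i ≠ 0))
      ≤ 2 * n * ENNReal.ofReal (1 - p * q) ^ D * (1 - ENNReal.ofReal (1 - p * q))⁻¹ := by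
  set r := ENNReal.ofReal (1 - p * q)
  have hr1 : r ≤ 1 := ENNReal.ofReal_le_one.mpr (by nlinarith [mul_nonneg hp0 hq0])
  have hr : r ^ k ≤ r ^ D * (1 - r)⁻¹ :=
    (pow_le_pow_right_of_le_one' hr1 hD).trans (le_mul_of_one_le_right zero_le
      (ENNReal.one_le_inv.mpr tsub_le_self))
  calc _ ≤ pathExpect (solTrans p q) a m fun ω =>
          ∑ i ∈ Ioc D k, (ω k i : ENNReal) + ∑ j ∈ a.support, (ω k (j + k) : ENNReal) :=
        pathExpect_mono fun ω hω => hω.ind_exists_pile_gt_le hk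
    _ = ∑ i ∈ Ioc D k, pathExpect (solTrans p q) a m (fun ω => (ω k i : ENNReal))
          + ∑ j ∈ a.support,
              pathExpect (solTrans p q) a m (fun ω => (ω k (j + k) : ENNReal)) := by
        rw [pathExpect_add, pathExpect_sum, pathExpect_sum]
    _ ≤ ∑ i ∈ Ioc D k, r ^ i * n + ∑ j ∈ a.support, r ^ k * a j := by
        gcongr with i hi j
        · exact pathExpect_pile_le hp0 hp1 hq1 ha (mem_Ioc.mp hi).2 hk
        · exact pathExpect_apply_add_le_pow_mul (fun x => tsum_solTrans hp0 hp1 hq1)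
            (fun x j => tsum_solTrans_mul_succ_le hp0 hp1 hq1 j) a hk j
    _ = (∑ i ∈ Ioc D k, r ^ i) * n + r ^ k * n := by
        rw [sum_mul, ← mul_sum, ← Nat.cast_sum, ha]
    _ ≤ r ^ D * (1 - r)⁻¹ * n + r ^ D * (1 - r)⁻¹ * n := by
        gcongr
        exact sum_Ioc_pow_le r D k
    _ = _ := by ring

end Solitaire

section Chernoff

lemma one_sub_add_mul_exp_pow_le {p : ℝ} (hp0 : 0 ≤ p) (hp1 : p ≤ 1) (t : ℝ) (N : ℕ) :
    (1 - p + p * Real.exp t) ^ N ≤ Real.exp (p * N * (Real.exp t - 1)) := by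
  rw [show p * N * (Real.exp t - 1) = N * (p * (Real.exp t - 1)) by ring, Real.exp_nat_mul]
  exact pow_le_pow_left₀ (by nlinarith [Real.exp_pos t])
    (by linarith [Real.add_one_le_exp (p * (Real.exp t - 1))]) N

lemma exp_sub_one_le {t : ℝ} (ht : |t| ≤ 1) : Real.exp t - 1 ≤ t + t ^ 2 := by
  linarith [(abs_le.mp (Real.abs_exp_sub_one_sub_id_le ht)).2]

lemma chernoff_exponent_upper_le {ε μ P : ℝ} (hε0 : 0 ≤ ε) (hε1 : ε ≤ 1) (hμ : 0 ≤ μ)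
    (hP : P ≤ (1 + ε / 2) * μ) :
    -(ε / 6 * ((1 + ε) * μ)) + P * (Real.exp (ε / 6) - 1) ≤ -(ε ^ 2 * μ) / 24 := by
  have he := exp_sub_one_le (t := ε / 6) (by rw [abs_of_nonneg (by positivity)]; linarith)
  have he0 : 0 ≤ Real.exp (ε / 6) - 1 := by linarith [Real.add_one_le_exp (ε / 6)]
  have h1 : P * (Real.exp (ε / 6) - 1) ≤ (1 + ε / 2) * μ * (ε / 6 + (ε / 6) ^ 2) :=
    mul_le_mul hP he he0 (by positivity)
  nlinarith [mul_nonneg (mul_nonneg hμ (sq_nonneg ε)) (sub_nonneg.mpr hε1)]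

lemma chernoff_exponent_lower_le {ε μ P : ℝ} (hε0 : 0 ≤ ε) (hε1 : ε ≤ 1) (hμ : 0 ≤ μ)
    (hP : μ ≤ P) :
    -(-(ε / 6) * ((1 - ε) * μ)) + P * (Real.exp (-(ε / 6)) - 1) ≤ -(ε ^ 2 * μ) / 24 := by
  have he := exp_sub_one_le (t := -(ε / 6)) <| by
    rw [abs_neg, abs_of_nonneg (by positivity)]
    linarith
  have hneg : -(ε / 6) + (-(ε / 6)) ^ 2 ≤ 0 := by nlinarith
  have h1 : P * (Real.exp (-(ε / 6)) - 1) ≤ μ * (-(ε / 6) + (-(ε / 6)) ^ 2) :=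
    (mul_le_mul_of_nonneg_left he (hμ.trans hP)).trans (mul_le_mul_of_nonpos_right hP hneg)
  nlinarith [mul_nonneg hμ (sq_nonneg ε)]

end Chernoff

section Deviation

variable {p q : ℝ} {x : ℕ →₀ ℕ}

lemma mul_sum_le_numCandidates (q : ℝ) :
    q * ∑ i ∈ x.support, (x i : ℝ) ≤ numCandidates x q := by
  rw [numCandidates, mul_sum, Nat.cast_sum]
  exact sum_le_sum fun i _ => Nat.le_ceil _

lemma numCandidates_le (hq0 : 0 ≤ q) :
    (numCandidates x q : ℝ) ≤ q * ∑ i ∈ x.support, (x i : ℝ) + x.support.card := by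
  rw [numCandidates, mul_sum, Nat.cast_sum, card_eq_sum_ones, Nat.cast_sum, ← sum_add_distrib]
  exact sum_le_sum fun i _ => by simpa using (Nat.ceil_lt_add_one (by positivity)).le

variable (hp0 : 0 ≤ p) (hp1 : p ≤ 1) (hq1 : q ≤ 1)
include hp0 hp1 hq1

/-- The Chernoff bound for the size of the new pile. -/
lemma tsum_solTrans_mul_ind_le (t s : ℝ) :
    ∑' b, solTrans p q x b * ind (0 ≤ t * ((b 0 : ℝ) - s))
      ≤ ENNReal.ofReal (Real.exp (-(t * s) + p * numCandidates x q * (Real.exp t - 1))) := by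
  calc _ ≤ ∑' b, solTrans p q x b *
          (ENNReal.ofReal (Real.exp (-(t * s))) * ENNReal.ofReal (Real.exp t ^ b 0)) :=
        ENNReal.tsum_le_tsum fun b => by
          gcongr
          refine ind_le_ofReal_exp.trans_eq ?_
          rw [← ENNReal.ofReal_mul (Real.exp_pos _).le, ← Real.exp_nat_mul, ← Real.exp_add]
          ring_nf
    _ = ENNReal.ofReal (Real.exp (-(t * s)))
          * ENNReal.ofReal ((1 - p + p * Real.exp t) ^ numCandidates x q) := by
        simp_rw [mul_left_comm (solTrans p q x _)]
        rw [ENNReal.tsum_mul_left, tsum_solTrans_mul_pow hp0 hp1 hq1 (Real.exp_pos t).le]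
    _ ≤ _ := by
        rw [← ENNReal.ofReal_mul (Real.exp_pos _).le, Real.exp_add]
        gcongr
        exact one_sub_add_mul_exp_pow_le hp0 hp1 t _

/-- `D + 1` bounds the rounding error `numCandidates x q - qn`. -/
lemma tsum_solTrans_mul_ind_deviation_le (hq0 : 0 ≤ q) {ε : ℝ} (hε0 : 0 ≤ ε) (hε1 : ε ≤ 1)
    {n D : ℕ} (hn : ∑ i ∈ x.support, x i = n) (hD : ∀ i, D < i → x i = 0)
    (hDε : (D : ℝ) + 1 ≤ ε * (q * n) / 2) :
    ∑' b, solTrans p q x b * ind (ε * (p * q * n) < |(b 0 : ℝ) - p * q * n|)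
      ≤ 2 * ENNReal.ofReal (Real.exp (-(ε ^ 2 * (p * q * n)) / 24)) := by
  set μ := p * q * n
  have hμ : 0 ≤ μ := by positivity
  have hn' : ∑ i ∈ x.support, (x i : ℝ) = n := by exact_mod_cast hn
  have hcard : (x.support.card : ℝ) ≤ D + 1 := by
    have : x.support ⊆ range (D + 1) := fun i hi => mem_range.mpr <| by
      by_contra h
      exact Finsupp.mem_support_iff.mp hi (hD i (by omega))
    exact_mod_cast (card_le_card this).trans (card_range _).le
  have hlow : μ ≤ p * numCandidates x q := by
    have := mul_sum_le_numCandidates (x := x) q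
    rw [hn'] at this
    simpa [μ, mul_assoc] using mul_le_mul_of_nonneg_left this hp0
  have hhigh : p * numCandidates x q ≤ (1 + ε / 2) * μ := by
    have := numCandidates_le (x := x) hq0
    rw [hn'] at this
    nlinarith
  calc _ ≤ ∑' b, solTrans p q x b * (ind (0 ≤ ε / 6 * ((b 0 : ℝ) - (1 + ε) * μ))
          + ind (0 ≤ -(ε / 6) * ((b 0 : ℝ) - (1 - ε) * μ))) :=
        ENNReal.tsum_le_tsum fun b => by
          gcongr
          refine (ind_mono fun h => ?_).trans (ind_or_le _ _)
          rcases lt_abs.mp h with h | h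
          · exact Or.inl (mul_nonneg (by positivity) (by linarith))
          · exact Or.inr (mul_nonneg_of_nonpos_of_nonpos (by linarith) (by linarith))
    _ = ∑' b, solTrans p q x b * ind (0 ≤ ε / 6 * ((b 0 : ℝ) - (1 + ε) * μ))
          + ∑' b, solTrans p q x b * ind (0 ≤ -(ε / 6) * ((b 0 : ℝ) - (1 - ε) * μ)) := by
        simp_rw [mul_add]
        exact ENNReal.tsum_add
    _ ≤ ENNReal.ofReal (Real.exp (-(ε ^ 2 * μ) / 24))
          + ENNReal.ofReal (Real.exp (-(ε ^ 2 * μ) / 24)) := by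
        gcongr
        · refine (tsum_solTrans_mul_ind_le hp0 hp1 hq1 _ _).trans ?_
          gcongr
          exact chernoff_exponent_upper_le hε0 hε1 hμ hhigh
        · refine (tsum_solTrans_mul_ind_le hp0 hp1 hq1 _ _).trans ?_
          gcongr
          exact chernoff_exponent_lower_le hε0 hε1 hμ hlow
    _ = _ := (two_mul _).symm

end Deviation

section Window

variable {p q ε : ℝ} {a : ℕ →₀ ℕ} {n : ℕ}

lemma pathExpect_ind_deviation_le (hp0 : 0 ≤ p) (hp1 : p ≤ 1) (hq0 : 0 ≤ q) (hq1 : q ≤ 1)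
    (hε0 : 0 ≤ ε) (hε1 : ε ≤ 1) (ha : ∑ i ∈ a.support, a i = n) {D : ℕ}
    (hDε : (D : ℝ) + 1 ≤ ε * (q * n) / 2) {k m : ℕ} (hDk : D < k) (hkm : k ≤ m) :
    pathExpect (solTrans p q) a m (fun ω => ind (ε * (p * q * n) < |(ω k 0 : ℝ) - p * q * n|))
      ≤ 2 * n * ENNReal.ofReal (1 - p * q) ^ D * (1 - ENNReal.ofReal (1 - p * q))⁻¹
        + 2 * ENNReal.ofReal (Real.exp (-(ε ^ 2 * (p * q * n)) / 24)) := by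
  obtain ⟨k, rfl⟩ : ∃ k', k = k' + 1 := ⟨k - 1, by omega⟩
  set G : (ℕ →₀ ℕ) → Prop := fun x => ∑ i ∈ x.support, x i = n ∧ ∀ i, D < i → x i = 0
  set F : (ℕ →₀ ℕ) → Prop := fun b => ε * (p * q * n) < |(b 0 : ℝ) - p * q * n|
  have hstep (x : ℕ →₀ ℕ) : ∑' b, solTrans p q x b * ind (G x ∧ F b)
      ≤ 2 * ENNReal.ofReal (Real.exp (-(ε ^ 2 * (p * q * n)) / 24)) := by
    by_cases hx : G x
    · exact (ENNReal.tsum_le_tsum fun b => by gcongr; exact ind_mono And.right).trans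
        (tsum_solTrans_mul_ind_deviation_le hp0 hp1 hq1 hq0 hε0 hε1 hx.1 hx.2 hDε)
    · simp [ind_of_not, hx]
  calc _ ≤ pathExpect (solTrans p q) a m
          (fun ω => ind (∃ i, D < i ∧ ω k i ≠ 0) + ind (G (ω k) ∧ F (ω (k + 1)))) := by
        refine pathExpect_mono fun ω hω => (ind_mono fun hF => ?_).trans (ind_or_le _ _)
        by_cases h : ∃ i, D < i ∧ ω k i ≠ 0
        · exact Or.inl h
        · push Not at h
          exact Or.inr ⟨⟨ha ▸ hω.sum_eq (by omega), h⟩, hF⟩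
    _ = _ := pathExpect_add _ _ _ _
    _ ≤ _ := add_le_add (pathExpect_exists_pile_gt_le hp0 hp1 hq1 hq0 ha (by omega) (by omega))
        (pathExpect_step_le (fun x => tsum_solTrans hp0 hp1 hq1) hstep a (by omega))

lemma ofReal_window_bound {x e : ℝ} (hx0 : 0 < x) (hx1 : x ≤ 1) (he : 0 ≤ e) (n D M : ℕ) :
    (M : ENNReal) * (2 * n * ENNReal.ofReal (1 - x) ^ D * (1 - ENNReal.ofReal (1 - x))⁻¹
      + 2 * ENNReal.ofReal e)
      = ENNReal.ofReal (M * (2 * n * ((1 - x) ^ D / x) + 2 * e)) := by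
  have h1x : 0 ≤ 1 - x := by linarith
  have hsub : 1 - ENNReal.ofReal (1 - x) = ENNReal.ofReal x := by
    rw [← ENNReal.ofReal_one, ← ENNReal.ofReal_sub _ h1x, sub_sub_cancel]
  rw [hsub, ENNReal.ofReal_mul (by positivity), ENNReal.ofReal_add (by positivity) (by positivity),
    ENNReal.ofReal_mul (by positivity), ENNReal.ofReal_mul (by positivity),
    ENNReal.ofReal_mul (by positivity), ENNReal.ofReal_div_of_pos hx0, ENNReal.ofReal_pow h1x,
    ENNReal.ofReal_natCast, ENNReal.ofReal_natCast, ENNReal.ofReal_ofNat, div_eq_mul_inv]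
  ring

lemma pathProb_window_le (hp0 : 0 < p) (hp1 : p ≤ 1) (hq0 : 0 < q) (hq1 : q ≤ 1)
    (hε0 : 0 ≤ ε) (hε1 : ε ≤ 1) (ha : ∑ i ∈ a.support, a i = n) {D : ℕ}
    (hDε : (D : ℝ) + 1 ≤ ε * (q * n) / 2) (M : ℕ) :
    pathProb (solTrans p q) a (D + M) (fun ω => ∃ k, D + 1 ≤ k ∧ k ≤ D + M ∧
        ε * (p * q * n) < |(ω k 0 : ℝ) - p * q * n|)
      ≤ ENNReal.ofReal (M * (2 * n * ((1 - p * q) ^ D / (p * q))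
          + 2 * Real.exp (-(ε ^ 2 * (p * q * n)) / 24))) := by
  calc _ ≤ pathExpect (solTrans p q) a (D + M) fun ω => ind (∃ k ∈ Icc (D + 1) (D + M),
          ε * (p * q * n) < |(ω k 0 : ℝ) - p * q * n|) :=
        (pathProb_le_pathExpect _ _ _).trans <| pathExpect_mono fun ω _ =>
          ind_mono fun ⟨k, h1, h2, h3⟩ => ⟨k, mem_Icc.mpr ⟨h1, h2⟩, h3⟩
    _ ≤ ∑ k ∈ Icc (D + 1) (D + M), pathExpect (solTrans p q) a (D + M)
          (fun ω => ind (ε * (p * q * n) < |(ω k 0 : ℝ) - p * q * n|)) :=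
        (pathExpect_mono fun ω _ => ind_exists_le_sum _ _).trans_eq (pathExpect_sum _ _ _ _)
    _ ≤ ∑ k ∈ Icc (D + 1) (D + M),
          (2 * n * ENNReal.ofReal (1 - p * q) ^ D * (1 - ENNReal.ofReal (1 - p * q))⁻¹
            + 2 * ENNReal.ofReal (Real.exp (-(ε ^ 2 * (p * q * n)) / 24))) :=
        sum_le_sum fun k hk => pathExpect_ind_deviation_le hp0.le hp1 hq0.le hq1 hε0 hε1 ha hDε
          (by simp only [mem_Icc] at hk; omega) (mem_Icc.mp hk).2
    _ = _ := by
        rw [sum_const, Nat.card_Icc, nsmul_eq_mul, show D + M + 1 - (D + 1) = M by omega,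
          ofReal_window_bound (by positivity) (by nlinarith) (Real.exp_pos _).le]

end Window

section Asymptotics

variable {p q ε L n : ℝ}

lemma one_sub_pow_ceil_div_le {x c : ℝ} (hx0 : 0 < x) (hx1 : x ≤ 1) :
    (1 - x) ^ ⌈c / x⌉₊ ≤ Real.exp (-c) :=
  calc (1 - x) ^ ⌈c / x⌉₊ ≤ Real.exp (-x) ^ ⌈c / x⌉₊ :=
        pow_le_pow_left₀ (by linarith) (Real.one_sub_le_exp_neg x) _
    _ = Real.exp (-(x * ⌈c / x⌉₊)) := by rw [← Real.exp_nat_mul]; ring_nf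
    _ ≤ Real.exp (-c) := by
        gcongr
        exact (div_le_iff₀' hx0).mp (Nat.le_ceil _)

lemma exp_neg_mul_log_eq {n : ℕ} (hn : 0 < n) (k : ℕ) :
    Real.exp (-(k * Real.log n)) = ((n : ℝ) ^ k)⁻¹ := by
  rw [Real.exp_neg, ← Real.log_pow, Real.exp_log (by positivity)]

/-- `336 = 24 · 14`, so that the Chernoff error `exp (-ε² pqn / 24)` is at most `n⁻¹⁴`. -/
lemma mul_log_le_sq_mul (hp0 : 0 < p) (hq0 : 0 < q) (hq1 : q ≤ 1) (hε0 : 0 < ε) (hL : 1 ≤ L)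
    (h : 336 / ε ^ 2 * L ≤ p * q ^ 2 * n) : 336 * L ≤ ε ^ 2 * (p * q * n) := by
  have h1 : 336 * L ≤ ε ^ 2 * (p * q ^ 2 * n) :=
    calc 336 * L = ε ^ 2 * (336 / ε ^ 2 * L) := by field_simp
      _ ≤ _ := by gcongr
  have hn : 0 < n := pos_of_mul_pos_right (lt_of_lt_of_le (by positivity) h) (by positivity)
  have h2 : p * q ^ 2 * n ≤ p * q * n := by
    rw [sq, ← mul_assoc, mul_right_comm _ q n]
    exact mul_le_of_le_one_right (by positivity) hq1
  nlinarith

lemma ceil_div_add_one_le (hp0 : 0 < p) (hp1 : p ≤ 1) (hq0 : 0 < q) (hq1 : q ≤ 1) (hε0 : 0 < ε)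
    (hε1 : ε ≤ 1) (hL : 1 ≤ L) (h : 336 / ε ^ 2 * L ≤ p * q ^ 2 * n) :
    (⌈14 * L / (p * q)⌉₊ : ℝ) + 1 ≤ ε * (q * n) / 2 := by
  have hpq : 0 < p * q := by positivity
  have h1 : 336 * L ≤ ε * (p * q ^ 2 * n) := by
    calc 336 * L ≤ 336 / ε * L := by gcongr; rw [le_div_iff₀ hε0]; linarith
      _ = ε * (336 / ε ^ 2 * L) := by field_simp
      _ ≤ _ := by gcongr
  have h2 : 1 ≤ L / (p * q) := by rw [le_div_iff₀ hpq]; nlinarith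
  have h3 : 168 * (L / (p * q)) ≤ ε * (q * n) / 2 := by
    rw [show ε * (q * n) / 2 = ε * (p * q ^ 2 * n) / (2 * (p * q)) by field_simp,
      le_div_iff₀ (by positivity), show 168 * (L / (p * q)) * (2 * (p * q)) = 336 * L by
        field_simp; ring]
    exact h1
  have h4 := Nat.ceil_lt_add_one (show 0 ≤ 14 * L / (p * q) by positivity)
  have h5 : 14 * L / (p * q) = 14 * (L / (p * q)) := mul_div_assoc _ _ _
  linarith

end Asymptotics

lemma window_bound_le_inv {n M A B x : ℝ} (hn : 3 ≤ n) (hM0 : 0 ≤ M) (hM : M ≤ n ^ 3 + 1)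
    (hA0 : 0 ≤ A) (hA : A ≤ (n ^ 14)⁻¹) (hB : B ≤ (n ^ 14)⁻¹) (hx0 : 0 < x) (hx : 1 ≤ x * n) :
    M * (2 * n * (A / x) + 2 * B) ≤ 1 / n := by
  have hn0 : 0 < n := by linarith
  have hAx : A / x ≤ n * (n ^ 14)⁻¹ := by
    rw [div_le_iff₀ hx0]
    calc A ≤ (n ^ 14)⁻¹ := hA
      _ ≤ n * (n ^ 14)⁻¹ * x := by nlinarith [inv_nonneg.mpr (pow_nonneg hn0.le 14)]
  have hpoly : (n ^ 3 + 1) * (2 * n ^ 2 + 2) ≤ n ^ 13 := by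
    have h8 : 8 ≤ n ^ 8 := le_trans (by norm_num) (pow_le_pow_left₀ (by norm_num) hn 8)
    nlinarith [pow_le_pow_left₀ (by norm_num) hn 2, pow_le_pow_left₀ (by norm_num) hn 3,
      pow_pos hn0 5]
  calc M * (2 * n * (A / x) + 2 * B) ≤ M * ((2 * n ^ 2 + 2) * (n ^ 14)⁻¹) := by
        gcongr
        nlinarith
    _ ≤ (n ^ 3 + 1) * (2 * n ^ 2 + 2) * (n ^ 14)⁻¹ := by
        rw [mul_assoc]
        gcongr
    _ ≤ n ^ 13 * (n ^ 14)⁻¹ := by gcongr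
    _ = 1 / n := by field_simp

lemma pathProb_window_le_inv {p q ε : ℝ} {n : ℕ} {a : ℕ →₀ ℕ} (hp0 : 0 < p) (hp1 : p ≤ 1)
    (hq0 : 0 < q) (hq1 : q ≤ 1) (hε0 : 0 < ε) (hε1 : ε ≤ 1) (hn : 3 ≤ n)
    (ha : ∑ i ∈ a.support, a i = n) (h : 336 / ε ^ 2 * Real.log n ≤ p * q ^ 2 * n) :
    pathProb (solTrans p q) a (⌈14 * Real.log n / (p * q)⌉₊ + ⌈(n : ℝ) ^ 2 / p⌉₊)
      (fun ω => ∃ k, ⌈14 * Real.log n / (p * q)⌉₊ + 1 ≤ k ∧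
        k ≤ ⌈14 * Real.log n / (p * q)⌉₊ + ⌈(n : ℝ) ^ 2 / p⌉₊ ∧
        ε * (p * q * n) < |(ω k 0 : ℝ) - p * q * n|)
      ≤ ENNReal.ofReal (1 / n) := by
  have hn3 : (3 : ℝ) ≤ n := by exact_mod_cast hn
  have hL : 1 ≤ Real.log n := by
    rw [Real.le_log_iff_exp_le (by positivity)]
    linarith [Real.exp_one_lt_d9]
  have hμ := mul_log_le_sq_mul hp0 hq0 hq1 hε0 hL h
  have hpq : 1 ≤ p * q * n := by nlinarith [pow_le_one₀ hε0.le hε1 (n := 2)]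
  have hn14 : Real.exp (-(14 * Real.log n)) = ((n : ℝ) ^ 14)⁻¹ := by
    simpa using exp_neg_mul_log_eq (by omega : 0 < n) 14
  refine (pathProb_window_le hp0 hp1 hq0 hq1 hε0.le hε1 ha
    (ceil_div_add_one_le hp0 hp1 hq0 hq1 hε0 hε1 hL h) _).trans
    (ENNReal.ofReal_le_ofReal (window_bound_le_inv hn3 (Nat.cast_nonneg _) ?_
      (pow_nonneg (by nlinarith) _) ?_ ?_ (by positivity) hpq))
  · have h1 := Nat.ceil_lt_add_one (show 0 ≤ (n : ℝ) ^ 2 / p by positivity)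
    have h2 : (n : ℝ) ^ 2 / p ≤ n ^ 3 := by
      rw [div_le_iff₀ hp0]
      nlinarith
    linarith
  · exact (one_sub_pow_ceil_div_le (by positivity) (by nlinarith)).trans_eq hn14
  · exact (Real.exp_le_exp.mpr (by linarith)).trans_eq hn14

end BulgarianSolitaire

open BulgarianSolitaire in
theorem stmt6 (p q : ℕ → ℝ)
    (hp : ∀ n : ℕ, 2 ≤ n → 0 < p n ∧ p n ≤ 1) (hq : ∀ n : ℕ, 2 ≤ n → 0 < q n ∧ q n ≤ 1)
    (hinf : Tendsto (fun n : ℕ => p n * (q n) ^ 2 * n / Real.log n) atTop atTop)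
    (α0 : (n : ℕ) → ℕ →₀ ℕ) (hα0 : ∀ n : ℕ, 2 ≤ n → IsWeakComp n (α0 n)) :
    -- max over D+1 ≤ k ≤ D+M of |alpha^(k)_1 − pₙqₙn|/(pₙqₙn) → 0 in probability,
    -- with D = ⌈14·log n/(pₙqₙ)⌉ and M = ⌈n²/pₙ⌉; alpha^(k)_1 is part 0 of ω k:
    ∀ ε : ℝ, 0 < ε →
      Tendsto (fun n : ℕ =>
          pathProb (solTrans (p n) (q n)) (α0 n)
            (⌈14 * Real.log n / (p n * q n)⌉₊ + ⌈(n : ℝ) ^ 2 / p n⌉₊)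
            (fun ω => ∃ k : ℕ, ⌈14 * Real.log n / (p n * q n)⌉₊ + 1 ≤ k ∧
              k ≤ ⌈14 * Real.log n / (p n * q n)⌉₊ + ⌈(n : ℝ) ^ 2 / p n⌉₊ ∧
              ε * (p n * q n * n) < |((ω k) 0 : ℝ) - p n * q n * n|))
        atTop (nhds 0) := by
  intro ε hε
  have hlim : Tendsto (fun n : ℕ => ENNReal.ofReal (1 / n)) atTop (nhds 0) := by
    simpa using ENNReal.tendsto_ofReal tendsto_one_div_atTop_nhds_zero_nat
  refine tendsto_of_tendsto_of_tendsto_of_le_of_le' tendsto_const_nhds hlim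
    (Eventually.of_forall fun _ => zero_le) ?_
  have hε' : 0 < min ε 1 := lt_min hε one_pos
  filter_upwards [hinf.eventually_ge_atTop (336 / min ε 1 ^ 2), eventually_ge_atTop 3]
    with n hK hn
  obtain ⟨hp0, hp1⟩ := hp n (by omega)
  obtain ⟨hq0, hq1⟩ := hq n (by omega)
  have hlog : 0 < Real.log n := Real.log_pos (by exact_mod_cast (by omega : 1 < n))
  refine le_trans (pathProb_mono ?_) (pathProb_window_le_inv hp0 hp1 hq0 hq1 hε' (min_le_right _ _)
    hn (hα0 n (by omega)) ((le_div_iff₀ hlog).mp hK))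
  rintro ω ⟨k, h1, h2, h3⟩
  exact ⟨k, h1, h2, lt_of_le_of_lt (by gcongr; exact min_le_left _ _) h3⟩
end

section
/- Let (p_n) and (q_n) be sequences with 0 < p_n, q_n ≤ 1 such that p_n·q_n → 0 and p_n·q_n²·n/log n → ∞ as n → ∞, and let ρ_n = p_n·q_n²·n/(1 + log n) and r_n = ⌈ρ_n^{−1/3}/p_n⌉. Let (F_n) and (s_n) be sequences of nonnegative reals such that F_n = O(p_n·q_n·n), s_n/q_n → 1 as n → ∞, and F_n·s_n is a nonnegative integer for every n, and let B_n be a Binomial(F_n·s_n, (1−p_n)^{r_n}) random variable. Then for every ε > 0, P(|B_n + F_n·(1−s_n) − F_n·(1−p_n·q_n)^{r_n}| > ε·p_n²·q_n²·n·r_n) = o(p_n²·q_n·r_n/n²) as n → ∞; that is, this probability multiplied by n²/(p_n²·q_n·r_n) tends to 0. -/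
open Filter

/-- The probability that a Binomial(m,t) variable lies in the set A. -/
noncomputable def binomProb (m : ℕ) (t : ℝ) (A : Set ℕ) : ℝ :=
  ∑ k ∈ Finset.range (m + 1),
    Set.indicator A (fun k => (m.choose k : ℝ) * t ^ k * (1 - t) ^ (m - k)) k

/-- ρₙ = pₙ·qₙ²·n/(1 + log n). -/
noncomputable def rhoSeq (p q : ℕ → ℝ) (n : ℕ) : ℝ :=
  p n * (q n) ^ 2 * n / (1 + Real.log n)

/-- rₙ = ⌈ρₙ^(−1/3)/pₙ⌉. -/
noncomputable def rSeq (p q : ℕ → ℝ) (n : ℕ) : ℕ :=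
  ⌈(rhoSeq p q n) ^ (-(1 / 3) : ℝ) / p n⌉₊

/-!
With `W = ρₙ^{1/3}` and `L = 1 + log n`, the choice of `rₙ` makes `pₙ rₙ ≈ 1/W`. A second order
Bernoulli expansion of `(1 - x)^r` together with `sₙ ≈ qₙ` shows that the mean of
`Bₙ + Fₙ(1 - sₙ) - Fₙ(1 - pₙqₙ)^{rₙ}` has absolute value at most half the threshold
`ε pₙ²qₙ²n rₙ ≥ ε W² L`, while the binomial mean is `O(W³ L)`. A Chernoff bound then gives a
probability `≤ 2 exp (-6 L) ≤ 2 n⁻⁶`, and the normalising factor `n²/(pₙ²qₙrₙ)` is at most `n⁵`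
because `pₙ, qₙ ≥ 1/n`.
-/

open Real

section Binomial

variable {m : ℕ} {t : ℝ}

lemma choose_mul_pow_mul_one_sub_pow_nonneg (ht0 : 0 ≤ t) (ht1 : t ≤ 1) (k : ℕ) :
    0 ≤ (m.choose k : ℝ) * t ^ k * (1 - t) ^ (m - k) := by
  have : 0 ≤ 1 - t := by linarith
  positivity

lemma binomProb_nonneg (ht0 : 0 ≤ t) (ht1 : t ≤ 1) (A : Set ℕ) : 0 ≤ binomProb m t A :=
  Finset.sum_nonneg fun _ _ =>
    Set.indicator_nonneg (fun k _ => choose_mul_pow_mul_one_sub_pow_nonneg ht0 ht1 k) _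

lemma binomProb_mono (ht0 : 0 ≤ t) (ht1 : t ≤ 1) {A B : Set ℕ} (hAB : A ⊆ B) :
    binomProb m t A ≤ binomProb m t B :=
  Finset.sum_le_sum fun _ _ => Set.indicator_le_indicator_of_subset hAB
    (choose_mul_pow_mul_one_sub_pow_nonneg ht0 ht1) _

lemma binomProb_union_le (ht0 : 0 ≤ t) (ht1 : t ≤ 1) (A B : Set ℕ) :
    binomProb m t (A ∪ B) ≤ binomProb m t A + binomProb m t B := by
  have hind (S : Set ℕ) (k : ℕ) :
      0 ≤ S.indicator (fun k => (m.choose k : ℝ) * t ^ k * (1 - t) ^ (m - k)) k :=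
    Set.indicator_nonneg (fun k _ => choose_mul_pow_mul_one_sub_pow_nonneg ht0 ht1 k) k
  unfold binomProb
  rw [← Finset.sum_add_distrib]
  refine Finset.sum_le_sum fun k _ =>
    Set.indicator_apply_le' (fun hk => ?_) fun _ => add_nonneg (hind A k) (hind B k)
  rcases hk with hk | hk
  · rw [Set.indicator_of_mem hk]
    exact le_add_of_nonneg_right (hind B k)
  · rw [Set.indicator_of_mem hk]
    exact le_add_of_nonneg_left (hind A k)

/-- Exponential Markov inequality, with `1 + x ≤ eˣ` applied to the moment generating function
`(1 - t + t e^μ)^m`. -/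
lemma binomProb_pos_mul_sub_le (ht0 : 0 ≤ t) (ht1 : t ≤ 1) (μ c : ℝ) :
    binomProb m t {k : ℕ | 0 < μ * ((k : ℝ) - c)} ≤ exp (m * t * (exp μ - 1) - μ * c) := by
  have h1t : 0 ≤ 1 - t := by linarith
  calc binomProb m t {k : ℕ | 0 < μ * ((k : ℝ) - c)}
      ≤ ∑ k ∈ Finset.range (m + 1),
          (m.choose k : ℝ) * t ^ k * (1 - t) ^ (m - k) * exp (μ * (k - c)) := by
        refine Finset.sum_le_sum fun k _ =>
          Set.indicator_apply_le' (fun hk => ?_) fun _ => by positivity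
        exact le_mul_of_one_le_right (by positivity) (one_le_exp hk.le)
    _ = exp (-(μ * c)) * (t * exp μ + (1 - t)) ^ m := by
        rw [add_pow, Finset.mul_sum]
        refine Finset.sum_congr rfl fun k _ => ?_
        rw [show μ * ((k : ℝ) - c) = k * μ + -(μ * c) by ring, exp_add, exp_nat_mul, mul_pow]
        ring
    _ ≤ exp (-(μ * c)) * exp (t * (exp μ - 1)) ^ m := by
        have h := add_one_le_exp (t * (exp μ - 1))
        gcongr
        linarith
    _ = exp (m * t * (exp μ - 1) - μ * c) := by
        rw [← exp_nat_mul, ← exp_add]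
        ring_nf

lemma binomProb_abs_sub_gt_le (ht0 : 0 ≤ t) (ht1 : t ≤ 1) {θ : ℝ} (hθ0 : 0 < θ) (hθ1 : θ ≤ 1)
    (T : ℝ) :
    binomProb m t {k : ℕ | T < |(k : ℝ) - m * t|} ≤ 2 * exp (m * t * θ ^ 2 - θ * T) := by
  have hmt : 0 ≤ (m : ℝ) * t := by positivity
  have hsub : {k : ℕ | T < |(k : ℝ) - m * t|} ⊆
      {k : ℕ | 0 < θ * ((k : ℝ) - (m * t + T))} ∪ {k : ℕ | 0 < -θ * ((k : ℝ) - (m * t - T))} := by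
    intro k hk
    rcases lt_abs.mp (show T < _ from hk) with h | h
    · exact Or.inl (mul_pos hθ0 (by linarith))
    · exact Or.inr (show 0 < -θ * _ by nlinarith)
  have hmgf (μ : ℝ) (hμ : |μ| ≤ 1) : m * t * (exp μ - 1 - μ) ≤ m * t * μ ^ 2 :=
    mul_le_mul_of_nonneg_left (abs_le.mp (abs_exp_sub_one_sub_id_le hμ)).2 hmt
  calc binomProb m t {k : ℕ | T < |(k : ℝ) - m * t|}
      ≤ exp (m * t * (exp θ - 1) - θ * (m * t + T)) +
          exp (m * t * (exp (-θ) - 1) - -θ * (m * t - T)) :=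
        (binomProb_mono ht0 ht1 hsub).trans <| (binomProb_union_le ht0 ht1 _ _).trans <|
          add_le_add (binomProb_pos_mul_sub_le ht0 ht1 _ _) (binomProb_pos_mul_sub_le ht0 ht1 _ _)
    _ ≤ exp (m * t * θ ^ 2 - θ * T) + exp (m * t * θ ^ 2 - θ * T) := by
        have hθ : |θ| ≤ 1 := by rwa [abs_of_pos hθ0]
        refine add_le_add (exp_le_exp.mpr ?_) (exp_le_exp.mpr ?_)
        · linarith [hmgf θ hθ]
        · linarith [hmgf (-θ) (by rwa [abs_neg])]
    _ = 2 * exp (m * t * θ ^ 2 - θ * T) := by ring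

lemma binomProb_abs_sub_gt_le_exp_neg_min {T V : ℝ} (ht0 : 0 ≤ t) (ht1 : t ≤ 1)
    (hT : 0 < T) (hV0 : 0 < V) (hV : m * t ≤ V) :
    binomProb m t {k : ℕ | T < |(k : ℝ) - m * t|} ≤ 2 * exp (-min (T ^ 2 / (4 * V)) (T / 2)) := by
  rcases le_total (T / (2 * V)) 1 with hθ | hθ
  · refine (binomProb_abs_sub_gt_le ht0 ht1 (by positivity) hθ T).trans ?_
    gcongr
    calc m * t * (T / (2 * V)) ^ 2 - T / (2 * V) * T
        ≤ V * (T / (2 * V)) ^ 2 - T / (2 * V) * T := by gcongr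
      _ = -(T ^ 2 / (4 * V)) := by field_simp; norm_num
      _ ≤ -min (T ^ 2 / (4 * V)) (T / 2) := neg_le_neg (min_le_left _ _)
  · refine (binomProb_abs_sub_gt_le ht0 ht1 one_pos le_rfl T).trans ?_
    rw [le_div_iff₀ (by positivity)] at hθ
    gcongr
    linarith [min_le_right (T ^ 2 / (4 * V)) (T / 2)]

end Binomial

lemma natCast_mul_natCast_sub_one_nonneg (r : ℕ) : (0 : ℝ) ≤ r * (r - 1) := by
  cases r with
  | zero => simp
  | succ r => push_cast; nlinarith [r.cast_nonneg (α := ℝ)]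

lemma one_sub_pow_le_one_sub_mul_add {x : ℝ} (h0 : 0 ≤ x) (h1 : x ≤ 1) (r : ℕ) :
    (1 - x) ^ r ≤ 1 - r * x + r * (r - 1) / 2 * x ^ 2 := by
  induction r with
  | zero => simp
  | succ r ih =>
    calc (1 - x) ^ (r + 1) ≤ (1 - r * x + r * (r - 1) / 2 * x ^ 2) * (1 - x) := by
          rw [pow_succ]; gcongr
      _ ≤ 1 - ((r + 1 : ℕ) : ℝ) * x + (r + 1 : ℕ) * ((r + 1 : ℕ) - 1) / 2 * x ^ 2 := by
          push_cast
          nlinarith [mul_nonneg (natCast_mul_natCast_sub_one_nonneg r) (pow_nonneg h0 3)]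

lemma abs_one_sub_pow_sub_mul_one_sub_pow_le {p q s δ : ℝ} (hp0 : 0 ≤ p) (hp1 : p ≤ 1)
    (hq0 : 0 ≤ q) (hq1 : q ≤ 1) (hs : |s - q| ≤ δ * q) (hδ : δ ≤ 1) (r : ℕ) :
    |(1 - (1 - p * q) ^ r) - s * (1 - (1 - p) ^ r)| ≤ r * p * q * (δ + p * (r - 1)) := by
  have hpq1 : p * q ≤ 1 := mul_le_one₀ hp1 hq0 hq1
  have hA₁ := one_add_mul_sub_le_pow (a := 1 - p * q) (by linarith) r
  have hA₂ := one_sub_pow_le_one_sub_mul_add (mul_nonneg hp0 hq0) hpq1 r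
  have hB₁ := one_add_mul_sub_le_pow (a := 1 - p) (by linarith) r
  have hB₂ := one_sub_pow_le_one_sub_mul_add hp0 hp1 r
  obtain ⟨hs₁, hs₂⟩ := abs_le.mp hs
  have hr := natCast_mul_natCast_sub_one_nonneg r
  have hrp : 0 ≤ (r : ℝ) * p := mul_nonneg r.cast_nonneg hp0
  have hs0 : 0 ≤ s := by nlinarith
  rw [abs_le]
  have hrp2 : 0 ≤ r * (r - 1) * p ^ 2 := mul_nonneg hr (sq_nonneg p)
  constructor
  · nlinarith [mul_le_mul_of_nonneg_left hB₁ hs0, mul_le_mul_of_nonneg_right hs₂ hrp,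
      mul_nonneg hrp2 (mul_nonneg hq0 (by linarith : 0 ≤ 1 - q / 2))]
  · nlinarith [mul_le_mul_of_nonneg_left hB₂ hs0, mul_le_mul_of_nonneg_right hs₁ hrp,
      mul_le_mul_of_nonneg_right hs₂ hrp2, mul_nonneg (mul_nonneg hq0 hrp2) (sub_nonneg.mpr hδ)]

lemma abs_binomial_mean_offset_le {p q s δ F G : ℝ} {m : ℕ} (hp0 : 0 ≤ p) (hp1 : p ≤ 1)
    (hq0 : 0 ≤ q) (hq1 : q ≤ 1) (hs : |s - q| ≤ δ * q) (hδ : δ ≤ 1) (hF : |F| ≤ G)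
    (hm : (m : ℝ) = F * s) (r : ℕ) :
    |m * (1 - p) ^ r + F * (1 - s) - F * (1 - p * q) ^ r|
      ≤ G * (r * p * q * (δ + p * (r - 1))) := by
  rw [hm, show F * s * (1 - p) ^ r + F * (1 - s) - F * (1 - p * q) ^ r =
    F * ((1 - (1 - p * q) ^ r) - s * (1 - (1 - p) ^ r)) by ring, abs_mul]
  exact mul_le_mul hF (abs_one_sub_pow_sub_mul_one_sub_pow_le hp0 hp1 hq0 hq1 hs hδ r)
    (abs_nonneg _) ((abs_nonneg F).trans hF)

lemma six_mul_le_min_chernoff_exponent {ε C W L T : ℝ} (hε : 0 < ε) (hC : 0 < C) (hL : 0 < L)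
    (hW1 : 1 ≤ W) (hWT : 24 / ε ≤ W) (hWV : 192 * C / ε ^ 2 ≤ W) (hT : ε * W ^ 2 * L ≤ T) :
    6 * L ≤ min ((T / 2) ^ 2 / (4 * (2 * C * (W ^ 3 * L)))) (T / 2 / 2) := by
  refine le_min ?_ ?_
  · have hεW : 192 * C ≤ ε ^ 2 * W := by rwa [div_le_iff₀' (by positivity)] at hWV
    rw [le_div_iff₀ (by positivity)]
    calc 6 * L * (4 * (2 * C * (W ^ 3 * L))) = 192 * C * (W ^ 3 * L ^ 2) / 4 := by ring
      _ ≤ ε ^ 2 * W * (W ^ 3 * L ^ 2) / 4 := by gcongr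
      _ = (ε * W ^ 2 * L / 2) ^ 2 := by ring
      _ ≤ (T / 2) ^ 2 := by gcongr
  · have hεW : 24 ≤ ε * W := by rwa [div_le_iff₀' hε] at hWT
    have hWW : W ≤ W ^ 2 := by nlinarith
    nlinarith [mul_le_mul_of_nonneg_left hWW (mul_nonneg hε.le hL.le)]

/-- Here `W` plays `ρ^{1/3}`. The bound `4C/ε ≤ W` makes the mean offset at most half the
threshold `T = ε p² q² n r`, and `24/ε ≤ W`, `192C/ε² ≤ W` make both terms of the Chernoff exponent for the
deviation `T/2` at least `6L`. -/
lemma binomProb_deviation_le_two_mul_exp {p q n F s δ ε C W L : ℝ} {r m : ℕ}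
    (hp0 : 0 < p) (hp1 : p ≤ 1) (hq0 : 0 < q) (hq1 : q ≤ 1) (hε : 0 < ε) (hC : 0 < C)
    (hL : 0 < L) (hρ : p * q ^ 2 * n = W ^ 3 * L) (hW1 : 1 ≤ W) (hWδ : 4 * C / ε ≤ W)
    (hWT : 24 / ε ≤ W) (hWV : 192 * C / ε ^ 2 ≤ W) (hr : W⁻¹ ≤ p * r) (hr' : p * (r - 1) ≤ W⁻¹)
    (hF : |F| ≤ C * (p * q * n)) (hm : (m : ℝ) = F * s) (hs : |s - q| ≤ δ * q) (hδ1 : δ ≤ 1)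
    (hδ : δ ≤ ε / (4 * C)) :
    binomProb m ((1 - p) ^ r)
        {k : ℕ | ε * (p ^ 2 * q ^ 2 * n * r) < |(k : ℝ) + F * (1 - s) - F * (1 - p * q) ^ r|}
      ≤ 2 * exp (-(6 * L)) := by
  set t := (1 - p) ^ r
  have ht0 : 0 ≤ t := pow_nonneg (by linarith) r
  have ht1 : t ≤ 1 := pow_le_one₀ (by linarith) (by linarith)
  have hW0 : 0 < W := one_pos.trans_le hW1
  set T := ε * (p ^ 2 * q ^ 2 * n * r)
  have hT : ε * W ^ 2 * L ≤ T :=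
    calc ε * W ^ 2 * L = ε * (W ^ 3 * L) * W⁻¹ := by field_simp
      _ ≤ ε * (W ^ 3 * L) * (p * r) := by gcongr
      _ = T := by rw [← hρ]; ring
  have hTpos : 0 < T := lt_of_lt_of_le (by positivity) hT
  have hoffset : |m * t + F * (1 - s) - F * (1 - p * q) ^ r| ≤ T / 2 := by
    have hWinv : W⁻¹ ≤ ε / (4 * C) := by
      rw [inv_le_comm₀ hW0 (by positivity), inv_div]; exact hWδ
    refine (abs_binomial_mean_offset_le hp0.le hp1 hq0.le hq1 hs hδ1 hF hm r).trans ?_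
    calc C * (p * q * n) * (r * p * q * (δ + p * (r - 1)))
        ≤ C * (p * q * n) * (r * p * q * (ε / (2 * C))) := by
          have : 0 ≤ p * q * n := by nlinarith [pow_pos hW0 3]
          gcongr
          linarith [show ε / (4 * C) + ε / (4 * C) = ε / (2 * C) by field_simp; norm_num]
      _ = T / 2 := by field_simp; ring
  have hV : m * t ≤ 2 * C * (W ^ 3 * L) := by
    obtain ⟨hs₁, hs₂⟩ := abs_le.mp hs
    have hδq := mul_le_mul_of_nonneg_right hδ1 hq0.le
    have hs0 : 0 ≤ s := by linarith
    calc m * t ≤ m := mul_le_of_le_one_right m.cast_nonneg ht1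
      _ = F * s := hm
      _ ≤ |F| * s := mul_le_mul_of_nonneg_right (le_abs_self F) hs0
      _ ≤ C * (p * q * n) * (2 * q) := mul_le_mul hF (by linarith) hs0 ((abs_nonneg F).trans hF)
      _ = 2 * C * (W ^ 3 * L) := by rw [← hρ]; ring
  have hsub : {k : ℕ | T < |(k : ℝ) + F * (1 - s) - F * (1 - p * q) ^ r|} ⊆
      {k : ℕ | T / 2 < |(k : ℝ) - m * t|} := fun k hk => by
    have h := abs_sub_abs_le_abs_sub ((k : ℝ) + F * (1 - s) - F * (1 - p * q) ^ r)
      (m * t + F * (1 - s) - F * (1 - p * q) ^ r)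
    rw [show (k : ℝ) + F * (1 - s) - F * (1 - p * q) ^ r - (m * t + F * (1 - s) -
      F * (1 - p * q) ^ r) = k - m * t by ring] at h
    exact show T / 2 < _ by linarith [show T < _ from hk]
  calc binomProb m t {k : ℕ | T < |(k : ℝ) + F * (1 - s) - F * (1 - p * q) ^ r|}
      ≤ binomProb m t {k : ℕ | T / 2 < |(k : ℝ) - m * t|} := binomProb_mono ht0 ht1 hsub
    _ ≤ 2 * exp (-min ((T / 2) ^ 2 / (4 * (2 * C * (W ^ 3 * L)))) (T / 2 / 2)) :=
        binomProb_abs_sub_gt_le_exp_neg_min ht0 ht1 (by linarith) (by positivity) hV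
    _ ≤ 2 * exp (-(6 * L)) := by
        gcongr
        exact six_mul_le_min_chernoff_exponent hε hC hL hW1 hWT hWV hT

lemma le_mul_natCeil_div {a : ℝ} (ha : 0 < a) (y : ℝ) : y ≤ a * ⌈y / a⌉₊ := by
  rw [← div_le_iff₀' ha]; exact Nat.le_ceil _

lemma mul_natCeil_div_sub_one_lt {a y : ℝ} (ha : 0 < a) (hy : 0 ≤ y) :
    a * (⌈y / a⌉₊ - 1) < y := by
  rw [← lt_div_iff₀' ha, sub_lt_iff_lt_add]; exact Nat.ceil_lt_add_one (by positivity)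

lemma sq_div_sq_mul_mul_le_pow_five {n p q r : ℝ} (hp : 0 < p) (hq : 0 < q) (hpn : 1 ≤ p * n)
    (hqn : 1 ≤ q * n) (hr : 1 ≤ r) : n ^ 2 / (p ^ 2 * q * r) ≤ n ^ 5 := by
  rw [div_le_iff₀ (by positivity)]
  calc n ^ 2 ≤ n ^ 2 * ((p * n) ^ 2 * (q * n) * r) :=
        le_mul_of_one_le_right (sq_nonneg n) (one_le_mul_of_one_le_of_one_le
          (one_le_mul_of_one_le_of_one_le (one_le_pow₀ hpn) hqn) hr)
    _ = n ^ 5 * (p ^ 2 * q * r) := by ring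

lemma exp_neg_six_mul_one_add_log_le {x : ℝ} (hx : 0 < x) :
    exp (-(6 * (1 + log x))) ≤ (x ^ 6)⁻¹ := by
  rw [← exp_log (pow_pos hx 6), ← exp_neg, log_pow, exp_le_exp]
  push_cast
  linarith

lemma tendsto_rhoSeq_atTop {p q : ℕ → ℝ} (hp : ∀ n, 0 ≤ p n)
    (hinf : Tendsto (fun n : ℕ => p n * q n ^ 2 * n / log n) atTop atTop) :
    Tendsto (rhoSeq p q) atTop atTop := by
  refine tendsto_atTop_mono' atTop ?_ (hinf.atTop_div_const two_pos)
  filter_upwards [eventually_ge_atTop 3] with n hn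
  have hn3 : (3 : ℝ) ≤ n := by exact_mod_cast hn
  have hlog : 1 ≤ log n := by
    rw [le_log_iff_exp_le (by linarith)]
    linarith [exp_one_lt_d9]
  have := hp n
  rw [rhoSeq, div_div]
  exact div_le_div_of_nonneg_left (by positivity) (by linarith) (by linarith)

lemma binomProb_deviation_mul_le {p q F s : ℕ → ℝ} {m : ℕ → ℕ} {δ ε C : ℝ} {n : ℕ}
    (hn : 1 ≤ n) (hp : 0 < p n ∧ p n ≤ 1) (hq : 0 < q n ∧ q n ≤ 1) (hε : 0 < ε) (hC : 0 < C)
    (hW1 : 1 ≤ rhoSeq p q n ^ (1 / 3 : ℝ)) (hWδ : 4 * C / ε ≤ rhoSeq p q n ^ (1 / 3 : ℝ))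
    (hWT : 24 / ε ≤ rhoSeq p q n ^ (1 / 3 : ℝ))
    (hWV : 192 * C / ε ^ 2 ≤ rhoSeq p q n ^ (1 / 3 : ℝ))
    (hF : ‖F n‖ ≤ C * ‖p n * q n * n‖) (hm : (m n : ℝ) = F n * s n)
    (hs : dist (s n / q n) 1 ≤ δ) (hδ1 : δ ≤ 1) (hδ : δ ≤ ε / (4 * C)) :
    binomProb (m n) ((1 - p n) ^ rSeq p q n)
        {k : ℕ | ε * ((p n) ^ 2 * (q n) ^ 2 * n * (rSeq p q n : ℝ)) <
          |(k : ℝ) + F n * (1 - s n) - F n * (1 - p n * q n) ^ rSeq p q n|}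
      * ((n : ℝ) ^ 2 / ((p n) ^ 2 * q n * (rSeq p q n : ℝ))) ≤ 2 / n := by
  obtain ⟨hp0, hp1⟩ := hp
  obtain ⟨hq0, hq1⟩ := hq
  have hn1 : (1 : ℝ) ≤ n := by exact_mod_cast hn
  have hL : 1 ≤ 1 + log n := by linarith [log_nonneg hn1]
  have hρ0 : 0 ≤ rhoSeq p q n := by rw [rhoSeq]; positivity
  set W := rhoSeq p q n ^ (1 / 3 : ℝ)
  set r := rSeq p q n
  have hρ : p n * q n ^ 2 * n = W ^ 3 * (1 + log n) := by
    rw [show W ^ 3 = W ^ (3 : ℝ) by norm_cast, ← rpow_mul hρ0, rhoSeq]; norm_num; field_simp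
  have hr : r = ⌈W⁻¹ / p n⌉₊ := by rw [← rpow_neg hρ0]; rfl
  have hrW : W⁻¹ ≤ p n * r := hr ▸ le_mul_natCeil_div hp0 _
  have hrW' : p n * (r - 1) ≤ W⁻¹ := (hr ▸ mul_natCeil_div_sub_one_lt hp0 (by positivity)).le
  have hF' : |F n| ≤ C * (p n * q n * n) := by
    rwa [norm_eq_abs, norm_eq_abs, abs_of_pos (a := p n * q n * n) (by positivity)] at hF
  have hs' : |s n - q n| ≤ δ * q n := by
    rw [show s n - q n = (s n / q n - 1) * q n by field_simp, abs_mul, abs_of_pos hq0]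
    exact mul_le_mul_of_nonneg_right hs hq0.le
  have hprob := binomProb_deviation_le_two_mul_exp hp0 hp1 hq0 hq1 hε hC (by linarith) hρ hW1
    hWδ hWT hWV hrW hrW' hF' hm hs' hδ1 hδ
  have hpqn : 1 ≤ p n * q n ^ 2 * n := by
    rw [hρ]; exact one_le_mul_of_one_le_of_one_le (one_le_pow₀ hW1) hL
  have hpn : 1 ≤ p n * n := by
    nlinarith [mul_le_mul_of_nonneg_left (pow_le_one₀ hq0.le hq1 (n := 2))
      (by positivity : 0 ≤ p n * n)]
  have hqn : 1 ≤ q n * n := by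
    nlinarith [mul_le_mul_of_nonneg_right (mul_le_one₀ hp1 hq0.le hq1)
      (by positivity : 0 ≤ q n * n)]
  have hr1 : (1 : ℝ) ≤ r := by
    rcases Nat.eq_zero_or_pos r with h | h
    · rw [h, Nat.cast_zero, mul_zero] at hrW; exact absurd hrW (not_le.mpr (by positivity))
    · exact_mod_cast h
  calc _ ≤ 2 * exp (-(6 * (1 + log n))) * n ^ 5 := by
        gcongr
        exact sq_div_sq_mul_mul_le_pow_five hp0 hq0 hpn hqn hr1
    _ ≤ 2 * ((n : ℝ) ^ 6)⁻¹ * n ^ 5 := by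
        gcongr; exact exp_neg_six_mul_one_add_log_le (by positivity)
    _ = 2 / n := by field_simp

theorem stmt9_general (p q : ℕ → ℝ)
    (hp : ∀ n : ℕ, 0 < p n ∧ p n ≤ 1) (hq : ∀ n : ℕ, 0 < q n ∧ q n ≤ 1)
    (hinf : Tendsto (fun n : ℕ => p n * (q n) ^ 2 * n / Real.log n) atTop atTop)
    (F s : ℕ → ℝ)
    (hFO : Asymptotics.IsBigO atTop (fun n : ℕ => F n) (fun n : ℕ => p n * q n * n))
    (hsq : Tendsto (fun n : ℕ => s n / q n) atTop (nhds 1))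
    (m : ℕ → ℕ) (hm : ∀ n : ℕ, (m n : ℝ) = F n * s n)
    (ε : ℝ) (hε : 0 < ε) :
    -- P(|Bₙ + Fₙ(1−sₙ) − Fₙ(1−pₙqₙ)^{rₙ}| > ε·pₙ²qₙ²·n·rₙ) = o(pₙ²qₙrₙ/n²):
    Tendsto (fun n : ℕ =>
        binomProb (m n) ((1 - p n) ^ rSeq p q n)
          {k : ℕ | ε * ((p n) ^ 2 * (q n) ^ 2 * n * (rSeq p q n : ℝ)) <
            |(k : ℝ) + F n * (1 - s n) - F n * (1 - p n * q n) ^ rSeq p q n|}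
        * ((n : ℝ) ^ 2 / ((p n) ^ 2 * q n * (rSeq p q n : ℝ))))
      atTop (nhds 0) := by
  obtain ⟨C, hC, hFC⟩ := hFO.exists_pos
  have hδ : 0 < min (ε / (4 * C)) 1 := lt_min (by positivity) one_pos
  have hW : Tendsto (fun n => rhoSeq p q n ^ (1 / 3 : ℝ)) atTop atTop :=
    (tendsto_rpow_atTop (by norm_num)).comp (tendsto_rhoSeq_atTop (fun n => (hp n).1.le) hinf)
  refine squeeze_zero' (Eventually.of_forall fun n => mul_nonneg ?_ ?_) ?_
    (tendsto_const_div_atTop_nhds_zero_nat 2)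
  · obtain ⟨hp0, hp1⟩ := hp n
    exact binomProb_nonneg (pow_nonneg (by linarith) _) (pow_le_one₀ (by linarith) (by linarith)) _
  · have := (hq n).1
    positivity
  filter_upwards [eventually_ge_atTop 1, hW.eventually_ge_atTop 1,
    hW.eventually_ge_atTop (4 * C / ε), hW.eventually_ge_atTop (24 / ε),
    hW.eventually_ge_atTop (192 * C / ε ^ 2), hFC.bound,
    hsq.eventually (Metric.closedBall_mem_nhds 1 hδ)] with n hn hW1 hWδ hWT hWV hF hs
  exact binomProb_deviation_mul_le hn (hp n) (hq n) hε hC hW1 hWδ hWT hWV hF (hm n) hs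
    (min_le_right _ _) (min_le_left _ _)

theorem stmt9 (p q : ℕ → ℝ)
    (hp : ∀ n : ℕ, 0 < p n ∧ p n ≤ 1) (hq : ∀ n : ℕ, 0 < q n ∧ q n ≤ 1)
    (hpq0 : Tendsto (fun n : ℕ => p n * q n) atTop (nhds 0))
    (hinf : Tendsto (fun n : ℕ => p n * (q n) ^ 2 * n / Real.log n) atTop atTop)
    (F s : ℕ → ℝ) (hF0 : ∀ n, 0 ≤ F n) (hs0 : ∀ n, 0 ≤ s n)
    (hFO : Asymptotics.IsBigO atTop (fun n : ℕ => F n) (fun n : ℕ => p n * q n * n))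
    (hsq : Tendsto (fun n : ℕ => s n / q n) atTop (nhds 1))
    (m : ℕ → ℕ) (hm : ∀ n : ℕ, (m n : ℝ) = F n * s n)
    (ε : ℝ) (hε : 0 < ε) :
    -- P(|Bₙ + Fₙ(1−sₙ) − Fₙ(1−pₙqₙ)^{rₙ}| > ε·pₙ²qₙ²·n·rₙ) = o(pₙ²qₙrₙ/n²):
    Tendsto (fun n : ℕ =>
        binomProb (m n) ((1 - p n) ^ rSeq p q n)
          {k : ℕ | ε * ((p n) ^ 2 * (q n) ^ 2 * n * (rSeq p q n : ℝ)) <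
            |(k : ℝ) + F n * (1 - s n) - F n * (1 - p n * q n) ^ rSeq p q n|}
        * ((n : ℝ) ^ 2 / ((p n) ^ 2 * q n * (rSeq p q n : ℝ))))
      atTop (nhds 0) :=
  stmt9_general p q hp hq hinf F s hFO hsq m hm ε hε
end

section
/- Let n ≥ 2 be an integer and let 0 < p ≤ 1 and 0 < q ≤ 1. Set D = ⌈14·log n/(p·q)⌉ and let X be a Binomial(D, p) random variable. Then P(X < log n / q) ≤ 2·n^{−4}. -/
/-!
A Chernoff bound. Tilting by `exp (a - k)` dominates the indicator of `k < a`, and the tilted sum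
is the binomial moment generating function `exp a * (t / e + 1 - t) ^ m ≤ exp (a - t m / 2)`.
Since the mean `p D` is at least `14 log n / q`, the exponent is at most `-6 log n / q ≤ -4 log n`.
-/

open Finset Real

lemma sum_exp_mul_binom_term (m : ℕ) (t s : ℝ) :
    ∑ k ∈ range (m + 1), exp (s * k) * ((m.choose k : ℝ) * t ^ k * (1 - t) ^ (m - k)) =
      (t * exp s + (1 - t)) ^ m := by
  rw [add_pow]
  refine sum_congr rfl fun k _ => ?_
  rw [mul_comm s, exp_nat_mul, mul_pow]
  ring

lemma binomProb_lt_le_exp_mul_pow (m : ℕ) {t : ℝ} (ht0 : 0 ≤ t) (ht1 : t ≤ 1) (a : ℝ) {s : ℝ}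
    (hs : 0 ≤ s) :
    binomProb m t {k : ℕ | (k : ℝ) < a} ≤ exp (s * a) * (t * exp (-s) + (1 - t)) ^ m := by
  rw [← sum_exp_mul_binom_term, mul_sum]
  refine sum_le_sum fun k _ => ?_
  have hterm : 0 ≤ (m.choose k : ℝ) * t ^ k * (1 - t) ^ (m - k) := by
    have := sub_nonneg.2 ht1
    positivity
  rw [← mul_assoc, ← exp_add]
  by_cases hk : (k : ℝ) < a
  · rw [Set.indicator_of_mem (s := {k : ℕ | (k : ℝ) < a}) hk]
    exact le_mul_of_one_le_left hterm (one_le_exp (by nlinarith))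
  · rw [Set.indicator_of_notMem (s := {k : ℕ | (k : ℝ) < a}) hk]
    positivity

lemma binomProb_lt_le_exp (m : ℕ) {t : ℝ} (ht0 : 0 ≤ t) (ht1 : t ≤ 1) (a : ℝ) :
    binomProb m t {k : ℕ | (k : ℝ) < a} ≤ exp (a - t * m / 2) := by
  have hexp : exp (-1) ≤ 1 / 2 := by
    have := add_one_le_exp 1
    rw [exp_neg, one_div]
    exact inv_anti₀ two_pos (by linarith)
  have hbase : t * exp (-1) + (1 - t) ≤ exp (-(t / 2)) := by
    have := add_one_le_exp (-(t / 2))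
    nlinarith
  calc binomProb m t {k : ℕ | (k : ℝ) < a}
      ≤ exp (1 * a) * (t * exp (-1) + (1 - t)) ^ m :=
        binomProb_lt_le_exp_mul_pow m ht0 ht1 a zero_le_one
    _ ≤ exp (1 * a) * exp (-(t / 2)) ^ m := by
        gcongr
    _ = exp (a - t * m / 2) := by
        rw [← exp_nat_mul, ← exp_add]
        ring_nf

theorem stmt14 (n : ℕ) (hn : 2 ≤ n) (p q : ℝ)
    (hp : 0 < p) (hp1 : p ≤ 1) (hq : 0 < q) (hq1 : q ≤ 1) :
    binomProb ⌈14 * Real.log n / (p * q)⌉₊ p {k : ℕ | (k : ℝ) < Real.log n / q} ≤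
      2 / (n : ℝ) ^ 4 := by
  set D := ⌈14 * log n / (p * q)⌉₊
  set a := log n / q
  have hlog : 0 < log n := log_pos (by exact_mod_cast hn)
  have ha : log n ≤ a := le_div_self hlog.le hq hq1
  have hmean : 14 * a ≤ p * D :=
    calc 14 * a = p * (14 * log n / (p * q)) := by simp only [a]; field_simp
      _ ≤ p * D := by gcongr; exact Nat.le_ceil _
  calc binomProb D p {k : ℕ | (k : ℝ) < a}
      ≤ exp (a - p * D / 2) := binomProb_lt_le_exp D hp.le hp1 a
    _ ≤ exp (-log ((n : ℝ) ^ 4)) := by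
        rw [log_pow]
        gcongr
        push_cast
        linarith
    _ = 1 / (n : ℝ) ^ 4 := by rw [exp_neg, exp_log (by positivity), one_div]
    _ ≤ 2 / (n : ℝ) ^ 4 := by gcongr; norm_num
end
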